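/- arXiv:1703.09083 — 10 statements merged into one kernel-verified Lean document; each statement's English description precedes it below -/
import Mathlib

section
/- Let (G, ≺) be a stable matching instance (graph with strict preference lists) and suppose every stable matching of (G, ≺) is perfect. Let M be a perfect stable matching and let e = uv be an edge not contained in any stable matching such that u is v's least preferred neighbor. Then any matching M' that is stable in (G \ e, ≺) is also stable in (G, ≺); in particular (G, ≺) and (G \ e, ≺) have the same set of stable matchings. -/
open SimpleGraph

variable {V : Type*} [Fintype V] [DecidableEq V]

/-- Strict preference lists: `pref v a b` means `v` prefers `a` over `b`. -/
structure StrictPrefs (G : SimpleGraph V) (pref : V → V → V → Prop) : Prop where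
  adj_left : ∀ v a b, pref v a b → G.Adj v a
  adj_right : ∀ v a b, pref v a b → G.Adj v b
  irrefl : ∀ v a, ¬ pref v a a
  trans : ∀ v a b c, pref v a b → pref v b c → pref v a c
  total : ∀ v a b, G.Adj v a → G.Adj v b → a ≠ b → pref v a b ∨ pref v b a

/-- A set of edges is a matching if its edges are pairwise vertex-disjoint. -/
def IsMatch (M : Set (Sym2 V)) : Prop :=
  ∀ e ∈ M, ∀ f ∈ M, ∀ v : V, v ∈ e → v ∈ f → e = f

/-- `M` covers `v`. -/
def Covers (M : Set (Sym2 V)) (v : V) : Prop := ∃ e ∈ M, v ∈ e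

/-- The edge `uv` is blocking for `M`. -/
def Blocks (G : SimpleGraph V) (pref : V → V → V → Prop)
    (M : Set (Sym2 V)) (u v : V) : Prop :=
  G.Adj u v ∧ s(u, v) ∉ M ∧ (∀ w, s(u, w) ∈ M → pref u v w) ∧
    (∀ w, s(v, w) ∈ M → pref v u w)

/-- `M` is a stable matching of `(G, pref)`. -/
def IsStable (G : SimpleGraph V) (pref : V → V → V → Prop) (M : Set (Sym2 V)) : Prop :=
  IsMatch M ∧ M ⊆ G.edgeSet ∧ ∀ u v, ¬ Blocks G pref M u v

/-- `Phi G pref u v` is the set of edges dominating the edge `uv` at one of its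
endpoints, together with `uv` itself. -/
def Phi (G : SimpleGraph V) (pref : V → V → V → Prop) (u v : V) : Set (Sym2 V) :=
  {f | f ∈ G.edgeSet ∧ (f = s(u, v) ∨ (∃ w, f = s(u, w) ∧ pref u w v)
      ∨ (∃ w, f = s(v, w) ∧ pref v w u))}

/-- The set of edges appearing in some stable matching. -/
def EMset (G : SimpleGraph V) (pref : V → V → V → Prop) : Set (Sym2 V) :=
  {e | ∃ M, IsStable G pref M ∧ e ∈ M}

open scoped Classical in
/-- `x(δ(v))`. -/
noncomputable def degSum (G : SimpleGraph V) (x : Sym2 V → ℝ) (v : V) : ℝ :=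
  ∑ e ∈ G.edgeFinset, if v ∈ e then x e else 0

open scoped Classical in
/-- `x(φ(uv))`. -/
noncomputable def phiSum (G : SimpleGraph V) (pref : V → V → V → Prop)
    (x : Sym2 V → ℝ) (u v : V) : ℝ :=
  ∑ e ∈ G.edgeFinset, if e ∈ Phi G pref u v then x e else 0

/-- Membership in the fractional stable matching polytope `FSM(G, pref)`. -/
def InFSM (G : SimpleGraph V) (pref : V → V → V → Prop) (x : Sym2 V → ℝ) : Prop :=
  (∀ e, 0 ≤ x e) ∧ (∀ e, e ∉ G.edgeSet → x e = 0) ∧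
  (∀ v, degSum G x v ≤ 1) ∧ (∀ u v, G.Adj u v → 1 ≤ phiSum G pref x u v)

/-- removing an edge `uv` not in any stable matching, where `u` is `v`'s
least preferred neighbor, preserves the set of stable matchings. -/
theorem delete_worst_edge_same_stable (G : SimpleGraph V) (pref : V → V → V → Prop)
    (hpref : StrictPrefs G pref) (u v : V) (huv : G.Adj u v)
    (hperfG : ∀ M, IsStable G pref M → ∀ x, Covers M x)
    (hperfG' : ∀ M, IsStable (G.deleteEdges {s(u, v)}) pref M → ∀ x, Covers M x)
    (M : Set (Sym2 V)) (hM : IsStable G pref M) (hMperf : ∀ x, Covers M x)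
    (hnot : s(u, v) ∉ EMset G pref)
    (hworst : ∀ w, G.Adj v w → w ≠ u → pref v w u) :
    (∀ M', IsStable (G.deleteEdges {s(u, v)}) pref M' → IsStable G pref M') ∧
      (∀ M', IsStable G pref M' ↔ IsStable (G.deleteEdges {s(u, v)}) pref M') := by

  have main : ∀ M', IsStable (G.deleteEdges {s(u, v)}) pref M' → IsStable G pref M' := by
    intro M' hM'
    obtain ⟨hmatch, hsub, hblock⟩ := hM'
    refine ⟨hmatch, ?_, ?_⟩
    · intro f hf
      exact (SimpleGraph.edgeSet_subset_edgeSet.mpr (SimpleGraph.deleteEdges_le _)) (hsub hf)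
    · intro a b hab
      obtain ⟨hadj, hnotin, ha, hb⟩ := hab
      by_cases h : s(a, b) = s(u, v)
      · have hvcov : Covers M' v := hperfG' M' ⟨hmatch, hsub, hblock⟩ v
        obtain ⟨f, hfM, hvf⟩ := hvcov
        induction f using Sym2.ind with
        | _ x y =>
        rw [Sym2.mem_iff] at hvf
        obtain ⟨w, hfw⟩ : ∃ w, s(x, y) = s(v, w) := by
          rcases hvf with rfl | rfl
          · exact ⟨y, rfl⟩
          · exact ⟨x, Sym2.eq_swap⟩
        rw [hfw] at hfM
        have hw_adj : (G.deleteEdges {s(u, v)}).Adj v w :=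
          (SimpleGraph.mem_edgeSet _).mp (hsub hfM)
        rw [SimpleGraph.deleteEdges_adj] at hw_adj
        have hwu : w ≠ u := by
          rintro rfl
          exact hw_adj.2 (by simp [Sym2.eq_swap])
        have h1 : pref v w u := hworst w hw_adj.1 hwu
        rw [Sym2.eq_iff] at h
        rcases h with ⟨h1a, h1b⟩ | ⟨h1a, h1b⟩
        · rw [h1a, h1b] at hb
          exact hpref.irrefl v u (hpref.trans v u w u (hb w hfM) h1)
        · rw [h1a, h1b] at ha
          exact hpref.irrefl v u (hpref.trans v u w u (ha w hfM) h1)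
      · refine hblock a b ⟨?_, hnotin, ha, hb⟩
        rw [SimpleGraph.deleteEdges_adj]
        exact ⟨hadj, by simpa using h⟩
  refine ⟨main, fun M' => ⟨?_, main M'⟩⟩
  intro hM'
  obtain ⟨hmatch, hsub, hblock⟩ := hM'
  refine ⟨hmatch, ?_, ?_⟩
  · intro f hf
    rw [SimpleGraph.edgeSet_deleteEdges]
    refine ⟨hsub hf, ?_⟩
    intro hh
    simp only [Set.mem_singleton_iff] at hh
    exact hnot ⟨M', ⟨hmatch, hsub, hblock⟩, hh ▸ hf⟩
  · intro a b hab
    obtain ⟨hadj, hn, ha, hb⟩ := hab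
    rw [SimpleGraph.deleteEdges_adj] at hadj
    exact hblock a b ⟨hadj.1, hn, ha, hb⟩
end

section
/- Let (G, ≺) be a stable matching instance in which every stable matching is perfect, and let E_M be the set of edges contained in at least one stable matching, with H̄ = (V, E_M). Then for any edge uv ∈ E_M: u is the most preferred E_M-neighbor of v if and only if v is the least preferred E_M-neighbor of u. -/
open SimpleGraph

variable {V : Type*} [Fintype V] [DecidableEq V]

/-- `u` is the most preferred neighbor of `v` among edges of `S`. -/
def MostPrefIn (pref : V → V → V → Prop) (S : Set (Sym2 V)) (v u : V) : Prop :=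
  s(v, u) ∈ S ∧ ∀ w, s(v, w) ∈ S → w ≠ u → pref v u w

/-- `u` is the least preferred neighbor of `v` among edges of `S`. -/
def LeastPrefIn (pref : V → V → V → Prop) (S : Set (Sym2 V)) (v u : V) : Prop :=
  s(v, u) ∈ S ∧ ∀ w, s(v, w) ∈ S → w ≠ u → pref v w u


section BWAux

variable {V : Type*} [Fintype V] [DecidableEq V]

theorem exists_partner {M : Set (Sym2 V)} (hMp : ∀ x : V, Covers M x) (x : V) :
    ∃ y, s(x, y) ∈ M := by
  obtain ⟨e, he, hx⟩ := hMp x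
  obtain ⟨y, rfl⟩ := Sym2.mem_iff_exists.mp hx
  exact ⟨y, he⟩

noncomputable def partnerFn (M : Set (Sym2 V)) (hMp : ∀ x : V, Covers M x) (x : V) : V :=
  Classical.choose (exists_partner hMp x)

theorem partner_mem {M : Set (Sym2 V)} (hMp : ∀ x : V, Covers M x) (x : V) :
    s(x, partnerFn M hMp x) ∈ M :=
  Classical.choose_spec (exists_partner hMp x)

theorem partner_eq {M : Set (Sym2 V)} (hm : IsMatch M) (hMp : ∀ x : V, Covers M x)
    {x y : V} (hxy : s(x, y) ∈ M) : partnerFn M hMp x = y := by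
  have h := hm _ (partner_mem hMp x) _ hxy x (Sym2.mem_mk_left _ _) (Sym2.mem_mk_left _ _)
  exact Sym2.congr_right.mp h

theorem partner_invol {M : Set (Sym2 V)} (hm : IsMatch M) (hMp : ∀ x : V, Covers M x)
    (x : V) : partnerFn M hMp (partnerFn M hMp x) = x := by
  apply partner_eq hm hMp
  rw [Sym2.eq_swap]
  exact partner_mem hMp x

/-- One alternation step: if `x` strictly prefers its `N`-partner over its `M`-partner,
then `y = N(x)` strictly prefers its `M`-partner over `x = N(y)`. -/
theorem altern_step {G : SimpleGraph V} {pref : V → V → V → Prop}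
    (hpref : StrictPrefs G pref) {M N : Set (Sym2 V)}
    (hM : IsStable G pref M) (hN : IsStable G pref N)
    (hMp : ∀ x : V, Covers M x) (hNp : ∀ x : V, Covers N x)
    {x : V} (hx : pref x (partnerFn N hNp x) (partnerFn M hMp x)) :
    pref (partnerFn N hNp x) (partnerFn M hMp (partnerFn N hNp x)) x := by
  set y := partnerFn N hNp x with hy
  have hxyN : s(x, y) ∈ N := partner_mem hNp x
  have hadj : G.Adj x y := G.mem_edgeSet.mp (hN.2.1 hxyN)
  have hynm : y ≠ partnerFn M hMp x := by
    intro he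
    exact hpref.irrefl x _ (he ▸ hx)
  have hxyM : s(x, y) ∉ M := fun hc => hynm (partner_eq hM.1 hMp hc).symm
  have hxnpy : x ≠ partnerFn M hMp y := by
    intro hc
    apply hxyM
    rw [Sym2.eq_swap]
    exact hc ▸ partner_mem hMp y
  have hnb := hM.2.2 x y
  have hC : ∀ w, s(x, w) ∈ M → pref x y w := by
    intro w hw
    rw [← partner_eq hM.1 hMp hw]
    exact hx
  have hnD : ¬ (∀ w, s(y, w) ∈ M → pref y x w) := by
    intro hD
    exact hnb ⟨hadj, hxyM, hC, hD⟩
  have hnpref : ¬ pref y x (partnerFn M hMp y) := by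
    intro hp
    apply hnD
    intro w hw
    rw [← partner_eq hM.1 hMp hw]
    exact hp
  have hadjy : G.Adj y (partnerFn M hMp y) :=
    G.mem_edgeSet.mp (hM.2.1 (partner_mem hMp y))
  rcases hpref.total y x (partnerFn M hMp y) hadj.symm hadjy hxnpy with hp | hp
  · exact absurd hp hnpref
  · exact hp

open scoped Classical in
/-- Opposition of interests: both endpoints of an `M`-edge cannot strictly prefer `N`. -/
theorem opposition {G : SimpleGraph V} {pref : V → V → V → Prop}
    (hpref : StrictPrefs G pref) {M N : Set (Sym2 V)}
    (hM : IsStable G pref M) (hN : IsStable G pref N)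
    (hMp : ∀ x : V, Covers M x) (hNp : ∀ x : V, Covers N x)
    {u v : V} (huv : s(u, v) ∈ M)
    (hu : pref u (partnerFn N hNp u) v)
    (hv : pref v (partnerFn N hNp v) u) : False := by
  have hpMu : partnerFn M hMp u = v := partner_eq hM.1 hMp huv
  have hpMv : partnerFn M hMp v = u := partner_eq hM.1 hMp (Sym2.eq_swap ▸ huv)
  classical
  let T : Finset V :=
    Finset.univ.filter (fun x => pref x (partnerFn N hNp x) (partnerFn M hMp x))
  let T' : Finset V :=
    Finset.univ.filter (fun x => pref x (partnerFn M hMp x) (partnerFn N hNp x))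
  have hmemT : ∀ x : V, x ∈ T ↔ pref x (partnerFn N hNp x) (partnerFn M hMp x) := by
    intro x; simp [T]
  have hmemT' : ∀ x : V, x ∈ T' ↔ pref x (partnerFn M hMp x) (partnerFn N hNp x) := by
    intro x; simp [T']
  have claim1 : ∀ x ∈ T, partnerFn N hNp x ∈ T' := by
    intro x hx
    rw [hmemT'] ; rw [hmemT] at hx
    rw [partner_invol hN.1 hNp x]
    exact altern_step hpref hM hN hMp hNp hx
  have claim2 : ∀ x ∈ T', partnerFn M hMp x ∈ T := by
    intro x hx
    rw [hmemT] ; rw [hmemT'] at hx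
    rw [partner_invol hM.1 hMp x]
    exact altern_step hpref hN hM hNp hMp hx
  have hinjN : Set.InjOn (partnerFn N hNp) T := by
    intro a _ b _ hab
    have h1 := congrArg (partnerFn N hNp) hab
    rwa [partner_invol hN.1 hNp, partner_invol hN.1 hNp] at h1
  have hinjM : Set.InjOn (partnerFn M hMp) T' := by
    intro a _ b _ hab
    have h1 := congrArg (partnerFn M hMp) hab
    rwa [partner_invol hM.1 hMp, partner_invol hM.1 hMp] at h1
  have hc1 : T.card ≤ T'.card := Finset.card_le_card_of_injOn _ claim1 hinjN
  have hc2 : T'.card ≤ T.card := Finset.card_le_card_of_injOn _ claim2 hinjM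
  have himg : T'.image (partnerFn M hMp) = T := by
    apply Finset.eq_of_subset_of_card_le
    · intro a ha
      obtain ⟨b, hb, rfl⟩ := Finset.mem_image.mp ha
      exact claim2 b hb
    · rw [Finset.card_image_of_injOn hinjM]
      omega
  have hvT : v ∈ T := by rw [hmemT, hpMv]; exact hv
  have hvimg : v ∈ T'.image (partnerFn M hMp) := himg ▸ hvT
  obtain ⟨y, hy, hyv⟩ := Finset.mem_image.mp hvimg
  have hyu : y = u := by
    have h1 := congrArg (partnerFn M hMp) hyv
    rwa [partner_invol hM.1 hMp, hpMv] at h1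
  rw [hyu, hmemT', hpMu] at hy
  exact hpref.irrefl u _ (hpref.trans u _ _ _ hu hy)

end BWAux

/-- for `uv ∈ E_M`, `u` is `v`'s most preferred `E_M`-neighbor iff `v` is
`u`'s least preferred `E_M`-neighbor. -/
theorem best_worst_duality (G : SimpleGraph V) (pref : V → V → V → Prop)
    (hpref : StrictPrefs G pref)
    (hperf : ∀ M, IsStable G pref M → ∀ x, Covers M x)
    (hex : ∃ M, IsStable G pref M)
    (u v : V) (h : s(u, v) ∈ EMset G pref) :
    MostPrefIn pref (EMset G pref) v u ↔ LeastPrefIn pref (EMset G pref) u v := by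
  have hadj_uv : G.Adj u v := by
    obtain ⟨M, hM, he⟩ := h
    exact G.mem_edgeSet.mp (hM.2.1 he)
  constructor
  · rintro ⟨hvu, hmost⟩
    refine ⟨h, ?_⟩
    intro w hw hwv
    by_contra hcon
    have hadj_uw : G.Adj u w := by
      obtain ⟨N, hN, he⟩ := hw
      exact G.mem_edgeSet.mp (hN.2.1 he)
    have hpvw : pref u v w := by
      rcases hpref.total u v w hadj_uv hadj_uw (fun he => hwv he.symm) with hp | hp
      · exact hp
      · exact absurd hp hcon
    obtain ⟨N, hN, hwN⟩ := hw
    have hNp := hperf N hN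
    have hpNu : partnerFn N hNp u = w := partner_eq hN.1 hNp hwN
    set v' := partnerFn N hNp v with hv'
    have hvv'N : s(v, v') ∈ N := partner_mem hNp v
    have hv'u : v' ≠ u := by
      intro he
      have h1 : s(u, v) ∈ N := by rw [← Sym2.eq_swap]; exact he ▸ hvv'N
      have := hN.1 _ h1 _ hwN u (Sym2.mem_mk_left _ _) (Sym2.mem_mk_left _ _)
      exact hwv (Sym2.congr_right.mp this).symm
    have hpvuv' : pref v u v' := hmost v' ⟨N, hN, hvv'N⟩ hv'u
    apply hN.2.2 u v
    refine ⟨hadj_uv, ?_, ?_, ?_⟩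
    · intro hc
      have := hN.1 _ hc _ hwN u (Sym2.mem_mk_left _ _) (Sym2.mem_mk_left _ _)
      exact hwv (Sym2.congr_right.mp this).symm
    · intro w' hw'
      rw [← partner_eq hN.1 hNp hw', hpNu]
      exact hpvw
    · intro w' hw'
      rw [← partner_eq hN.1 hNp hw']
      exact hpvuv'
  · rintro ⟨huv, hleast⟩
    refine ⟨by rwa [Sym2.eq_swap], ?_⟩
    intro w hw hwu
    by_contra hcon
    have hadj_vw : G.Adj v w := by
      obtain ⟨N, hN, he⟩ := hw
      exact G.mem_edgeSet.mp (hN.2.1 he)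
    have hpvw : pref v w u := by
      rcases hpref.total v u w hadj_uv.symm hadj_vw (fun he => hwu he.symm) with hp | hp
      · exact absurd hp hcon
      · exact hp
    obtain ⟨N, hN, hwN⟩ := hw
    obtain ⟨M, hM, huvM⟩ := h
    have hMp := hperf M hM
    have hNp := hperf N hN
    have hpNv : partnerFn N hNp v = w := partner_eq hN.1 hNp hwN
    set u' := partnerFn N hNp u with hu'
    have huu'N : s(u, u') ∈ N := partner_mem hNp u
    have hu'v : u' ≠ v := by
      intro he
      have h1 : s(v, u) ∈ N := by rw [← Sym2.eq_swap]; exact he ▸ huu'N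
      have := hN.1 _ h1 _ hwN v (Sym2.mem_mk_left _ _) (Sym2.mem_mk_left _ _)
      exact hwu (Sym2.congr_right.mp this).symm
    have hpu : pref u u' v := hleast u' ⟨N, hN, huu'N⟩ hu'v
    exact opposition hpref hM hN hMp hNp huvM hpu (by rw [hpNv]; exact hpvw)
end

section
/- Let (G, ≺) be a stable matching instance in which every stable matching is perfect, let E_M be the edges appearing in some stable matching, and H̄ = (V, E_M). Then every vertex v with at least one incident edge in E_M is the most preferred E_M-neighbor of exactly one vertex. -/
open SimpleGraph

variable {V : Type*} [Fintype V] [DecidableEq V]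

/-- In a finite nonempty set of neighbors, there is a most preferred element. -/
lemma exists_max_of_finset (G : SimpleGraph V) (pref : V → V → V → Prop)
    (hpref : StrictPrefs G pref) (w : V) :
    ∀ s : Finset V, (∀ a ∈ s, G.Adj w a) → s.Nonempty →
      ∃ m ∈ s, ∀ b ∈ s, b ≠ m → pref w m b := by
  classical
  intro s
  induction s using Finset.induction_on with
  | empty => intro _ hs; simp at hs
  | @insert a t hat ih =>
    intro hadj _
    by_cases ht : t.Nonempty
    · obtain ⟨m, hm, hmax⟩ := ih (fun b hb => hadj b (Finset.mem_insert_of_mem hb)) ht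
      have ham : a ≠ m := fun h => hat (h ▸ hm)
      rcases hpref.total w a m (hadj a (Finset.mem_insert_self a t))
          (hadj m (Finset.mem_insert_of_mem hm)) ham with hp | hp
      · refine ⟨a, Finset.mem_insert_self a t, ?_⟩
        intro b hb hba
        rcases Finset.mem_insert.mp hb with rfl | hbt
        · exact absurd rfl hba
        · by_cases hbm : b = m
          · exact hbm ▸ hp
          · exact hpref.trans w a m b hp (hmax b hbt hbm)
      · refine ⟨m, Finset.mem_insert_of_mem hm, ?_⟩
        intro b hb hbm
        rcases Finset.mem_insert.mp hb with rfl | hbt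
        · exact hp
        · exact hmax b hbt hbm
    · have : t = ∅ := Finset.not_nonempty_iff_eq_empty.mp ht
      subst this
      refine ⟨a, by simp, ?_⟩
      intro b hb hba
      simp only [Finset.mem_insert, Finset.notMem_empty, or_false] at hb
      exact absurd hb hba

/-- Every vertex has a most preferred `E_M`-neighbor. -/
lemma exists_mostPref (G : SimpleGraph V) (pref : V → V → V → Prop)
    (hpref : StrictPrefs G pref)
    (hperf : ∀ M, IsStable G pref M → ∀ x, Covers M x)
    (hex : ∃ M, IsStable G pref M) (x : V) :
    ∃ u, MostPrefIn pref (EMset G pref) x u := by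
  classical
  obtain ⟨M, hM⟩ := hex
  obtain ⟨e, heM, hxe⟩ := hperf M hM x
  obtain ⟨y, rfl⟩ : ∃ y, e = s(x, y) := by
    induction e with
    | h a b =>
      rcases Sym2.mem_iff.mp hxe with rfl | rfl
      · exact ⟨b, rfl⟩
      · exact ⟨a, Sym2.eq_swap.symm⟩
  have hyE : s(x, y) ∈ EMset G pref := ⟨M, hM, heM⟩
  set s : Finset V := Finset.univ.filter (fun u => s(x, u) ∈ EMset G pref) with hs
  have hmem : ∀ u, u ∈ s ↔ s(x, u) ∈ EMset G pref := by
    intro u; simp [hs]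
  have hadj : ∀ a ∈ s, G.Adj x a := by
    intro a ha
    obtain ⟨N, hN, haN⟩ := (hmem a).mp ha
    exact (SimpleGraph.mem_edgeSet _).mp (hN.2.1 haN)
  obtain ⟨m, hm, hmax⟩ := exists_max_of_finset G pref hpref x s hadj ⟨y, (hmem y).mpr hyE⟩
  exact ⟨m, (hmem m).mp hm, fun u hu hum => hmax u ((hmem u).mpr hu) hum⟩

/-- Key blocking argument: if `v` is `w`'s most preferred `E_M`-neighbor, `w' ≠ w` is
matched to `v` in a stable matching `M`, and `v` prefers `w` to `w'`, contradiction. -/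
lemma blocks_of_mostPref (G : SimpleGraph V) (pref : V → V → V → Prop)
    (M : Set (Sym2 V)) (hM : IsStable G pref M) (w w' v : V)
    (hbest : MostPrefIn pref (EMset G pref) w v)
    (hwv' : s(w', v) ∈ M) (hne : w ≠ w') (hp : pref v w w') : False := by
  obtain ⟨hmem, hmax⟩ := hbest
  obtain ⟨N, hN, hwvN⟩ := hmem
  have hAdj : G.Adj w v := (SimpleGraph.mem_edgeSet _).mp (hN.2.1 hwvN)
  have hAdj' : G.Adj w' v := (SimpleGraph.mem_edgeSet _).mp (hM.2.1 hwv')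
  have hwne : w ≠ v := hAdj.ne
  have hw'ne : w' ≠ v := hAdj'.ne
  have hnotin : s(w, v) ∉ M := by
    intro hin
    have heq := hM.1 _ hin _ hwv' v (by simp) (by simp)
    rw [Sym2.eq_iff] at heq
    rcases heq with ⟨h1, _⟩ | ⟨h1, _⟩
    · exact hne h1
    · exact hwne h1
  refine hM.2.2 w v ⟨hAdj, hnotin, ?_, ?_⟩
  · intro z hz
    have hzne : z ≠ v := fun h => hnotin (h ▸ hz)
    exact hmax z ⟨M, hM, hz⟩ hzne
  · intro z hz
    have heq := hM.1 _ hz _ hwv' v (by simp) (by simp)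
    rw [Sym2.eq_iff] at heq
    rcases heq with ⟨h1, _⟩ | ⟨_, h2⟩
    · exact absurd h1.symm hw'ne
    · exact h2 ▸ hp

/-- Uniqueness of the vertex whose most preferred `E_M`-neighbor is `v`. -/
lemma mostPref_unique (G : SimpleGraph V) (pref : V → V → V → Prop)
    (hpref : StrictPrefs G pref) {w w' v : V}
    (h1 : MostPrefIn pref (EMset G pref) w v)
    (h2 : MostPrefIn pref (EMset G pref) w' v) : w = w' := by
  by_contra hne
  obtain ⟨M, hM, hwvM⟩ := h1.1
  obtain ⟨M', hM', hwvM'⟩ := h2.1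
  have hAdjw : G.Adj w v := (SimpleGraph.mem_edgeSet _).mp (hM.2.1 hwvM)
  have hAdjw' : G.Adj w' v := (SimpleGraph.mem_edgeSet _).mp (hM'.2.1 hwvM')
  rcases hpref.total v w w' hAdjw.symm hAdjw'.symm hne with hp | hp
  · exact blocks_of_mostPref G pref M' hM' w w' v h1 hwvM' hne hp
  · exact blocks_of_mostPref G pref M hM w' w v h2 hwvM (Ne.symm hne) hp

/-- every vertex incident to an edge of `E_M` is the most preferred
`E_M`-neighbor of exactly one vertex. -/
theorem most_preferred_of_unique (G : SimpleGraph V) (pref : V → V → V → Prop)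
    (hpref : StrictPrefs G pref)
    (hperf : ∀ M, IsStable G pref M → ∀ x, Covers M x)
    (hex : ∃ M, IsStable G pref M)
    (v : V) (hv : ∃ e ∈ EMset G pref, v ∈ e) :
    ∃! w, MostPrefIn pref (EMset G pref) w v := by
  classical
  -- the "best neighbor" function
  set f : V → V := fun x => Classical.choose (exists_mostPref G pref hpref hperf hex x) with hf
  have hfspec : ∀ x, MostPrefIn pref (EMset G pref) x (f x) :=
    fun x => Classical.choose_spec (exists_mostPref G pref hpref hperf hex x)
  -- f is injective
  have hinj : Function.Injective f := by
    intro a b hab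
    exact mostPref_unique G pref hpref (hfspec a) (hab ▸ hfspec b)
  have hsurj : Function.Surjective f := Finite.surjective_of_injective hinj
  obtain ⟨w, hw⟩ := hsurj v
  refine ⟨w, hw ▸ hfspec w, ?_⟩
  intro w' hw'
  exact mostPref_unique G pref hpref hw' (hw ▸ hfspec w)
end

section
/- Let (G, ≺) be a stable matching instance. There exists a stable matching of (G, ≺) containing the edge uv if and only if the instance (G', ≺) has a stable matching, where G' is obtained from G by deleting vertices u and v, deleting every edge wy with uw ∈ E, w ≺_u v, and y ≺_w u is false (i.e., u ≺_w y), and symmetrically every edge wy with vw ∈ E, w ≺_v u, and v ≺_w y. -/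
open SimpleGraph

variable {V : Type*} [Fintype V] [DecidableEq V]

/-- The edges removed from `G` to form `G'` in Lemma `edges_in_a_SM`: all edges
incident to `u` or `v`, together with `E_u ∪ E_v`. -/
def RemovedEdges (G : SimpleGraph V) (pref : V → V → V → Prop) (u v : V) :
    Set (Sym2 V) :=
  {f | u ∈ f ∨ v ∈ f} ∪
    {f | ∃ w y, f = s(w, y) ∧ w ≠ u ∧ w ≠ v ∧ y ≠ u ∧ y ≠ v ∧
        G.Adj u w ∧ pref u w v ∧ pref w u y} ∪
    {f | ∃ w y, f = s(w, y) ∧ w ≠ u ∧ w ≠ v ∧ y ≠ u ∧ y ≠ v ∧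
        G.Adj v w ∧ pref v w u ∧ pref w v y}

lemma blocks_symm {V : Type*} {G : SimpleGraph V} {pref : V → V → V → Prop}
    {M : Set (Sym2 V)} {a b : V} (h : Blocks G pref M a b) : Blocks G pref M b a := by
  obtain ⟨h1, h2, h3, h4⟩ := h
  refine ⟨h1.symm, ?_, h4, h3⟩
  rwa [Sym2.eq_swap]

/-- there is a stable matching containing the edge `uv` iff the reduced
instance `G'` admits a stable matching. -/
theorem edge_in_stable_iff_reduced_instance (G : SimpleGraph V)
    (pref : V → V → V → Prop) (hpref : StrictPrefs G pref) (u v : V)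
    (huv : G.Adj u v)
    (hperfG : ∀ M, IsStable G pref M → ∀ x, Covers M x)
    (hperfG' : ∀ M, IsStable (G.deleteEdges (RemovedEdges G pref u v)) pref M →
      ∀ x, x ≠ u → x ≠ v → Covers M x) :
    (∃ M, IsStable G pref M ∧ s(u, v) ∈ M) ↔
      ∃ M', IsStable (G.deleteEdges (RemovedEdges G pref u v)) pref M' := by
  classical
  have hne : u ≠ v := huv.ne
  constructor
  · -- forward
    rintro ⟨M, ⟨hmatch, hsub, hstab⟩, hmem⟩
    refine ⟨M \ {s(u, v)}, ?_, ?_, ?_⟩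
    · intro e he f hf x hxe hxf
      exact hmatch e he.1 f hf.1 x hxe hxf
    · rintro e ⟨heM, hene⟩
      rw [SimpleGraph.edgeSet_deleteEdges]
      have hene' : e ≠ s(u, v) := hene
      refine ⟨hsub heM, ?_⟩
      rintro ((hcon | hcon) | hcon)
      · rcases hcon with hu | hv
        · exact hene' (hmatch e heM _ hmem u hu (by simp))
        · exact hene' (hmatch e heM _ hmem v hv (by simp))
      · obtain ⟨w, y, hewy, hwu, hwv, hyu, hyv, hauw, hpuwv, hpwuy⟩ := hcon
        refine hstab u w ⟨hauw, ?_, ?_, ?_⟩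
        · intro hin
          have : s(u, w) = s(u, v) := hmatch _ hin _ hmem u (by simp) (by simp)
          have hwv' : w = v := (Sym2.congr_right).mp this
          exact hpref.irrefl u v (hwv' ▸ hpuwv)
        · intro z hz
          have : s(u, z) = s(u, v) := hmatch _ hz _ hmem u (by simp) (by simp)
          have : z = v := (Sym2.congr_right).mp this
          rwa [this]
        · intro z hz
          have : s(w, z) = s(w, y) := hmatch _ hz _ (hewy ▸ heM) w (by simp) (by simp)
          have : z = y := (Sym2.congr_right).mp this
          rwa [this]
      · obtain ⟨w, y, hewy, hwu, hwv, hyu, hyv, havw, hpvwu, hpwvy⟩ := hcon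
        refine hstab v w ⟨havw, ?_, ?_, ?_⟩
        · intro hin
          have : s(v, w) = s(u, v) := hmatch _ hin _ hmem v (by simp) (by simp)
          have hwu' : w = u := by
            rw [Sym2.eq_swap (a := u)] at this
            exact (Sym2.congr_right).mp this
          exact hpref.irrefl v u (hwu' ▸ hpvwu)
        · intro z hz
          have : s(v, z) = s(u, v) := hmatch _ hz _ hmem v (by simp) (by simp)
          have : z = u := by
            rw [Sym2.eq_swap (a := u)] at this
            exact (Sym2.congr_right).mp this
          rwa [this]
        · intro z hz
          have : s(w, z) = s(w, y) := hmatch _ hz _ (hewy ▸ heM) w (by simp) (by simp)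
          have : z = y := (Sym2.congr_right).mp this
          rwa [this]
    · intro a b hb
      obtain ⟨hadj', hnm, hca, hcb⟩ := hb
      rw [SimpleGraph.deleteEdges_adj] at hadj'
      obtain ⟨hadj, hnr⟩ := hadj'
      have hau : a ≠ u := fun h => hnr (Or.inl (Or.inl (Or.inl (by simp [h]))))
      have hbu : b ≠ u := fun h => hnr (Or.inl (Or.inl (Or.inl (by simp [h]))))
      have hav : a ≠ v := fun h => hnr (Or.inl (Or.inl (Or.inr (by simp [h]))))
      have hbv : b ≠ v := fun h => hnr (Or.inl (Or.inl (Or.inr (by simp [h]))))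
      refine hstab a b ⟨hadj, ?_, ?_, ?_⟩
      · intro hin
        refine hnm ⟨hin, ?_⟩
        simp only [Set.mem_singleton_iff, Sym2.eq_iff]
        rintro (⟨rfl, rfl⟩ | ⟨rfl, rfl⟩)
        · exact hau rfl
        · exact hbu rfl
      · intro z hz
        refine hca z ⟨hz, ?_⟩
        simp only [Set.mem_singleton_iff, Sym2.eq_iff]
        rintro (⟨rfl, rfl⟩ | ⟨rfl, rfl⟩)
        · exact hau rfl
        · exact hav rfl
      · intro z hz
        refine hcb z ⟨hz, ?_⟩
        simp only [Set.mem_singleton_iff, Sym2.eq_iff]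
        rintro (⟨rfl, rfl⟩ | ⟨rfl, rfl⟩)
        · exact hbu rfl
        · exact hbv rfl
  · -- backward
    rintro ⟨M', hM'⟩
    obtain ⟨hmatch', hsub', hstab'⟩ := hM'
    have hM'S : IsStable (G.deleteEdges (RemovedEdges G pref u v)) pref M' :=
      ⟨hmatch', hsub', hstab'⟩
    have hnuv : ∀ e ∈ M', u ∉ e ∧ v ∉ e := by
      intro e he
      have := hsub' he
      rw [SimpleGraph.edgeSet_deleteEdges] at this
      exact ⟨fun h => this.2 (Or.inl (Or.inl (Or.inl h))),
        fun h => this.2 (Or.inl (Or.inl (Or.inr h)))⟩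
    have hnr : ∀ e ∈ M', e ∉ RemovedEdges G pref u v := by
      intro e he
      have := hsub' he
      rw [SimpleGraph.edgeSet_deleteEdges] at this
      exact this.2
    set M : Set (Sym2 V) := insert s(u, v) M' with hMdef
    -- key helpers
    have key1 : ∀ w z : V, w ≠ u → w ≠ v → z ≠ u → z ≠ v → G.Adj u w → pref u w v →
        pref w u z → s(w, z) ∈ M' → False := by
      intro w z hwu hwv hzu hzv h1 h2 h3 hin
      exact hnr _ hin (Or.inl (Or.inr ⟨w, z, rfl, hwu, hwv, hzu, hzv, h1, h2, h3⟩))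
    have key2 : ∀ w z : V, w ≠ u → w ≠ v → z ≠ u → z ≠ v → G.Adj v w → pref v w u →
        pref w v z → s(w, z) ∈ M' → False := by
      intro w z hwu hwv hzu hzv h1 h2 h3 hin
      exact hnr _ hin (Or.inr ⟨w, z, rfl, hwu, hwv, hzu, hzv, h1, h2, h3⟩)
    have hStabM : ∀ a b, ¬ Blocks G pref M a b := by
      have helperU : ∀ b, Blocks G pref M u b → False := by
        rintro b ⟨hadj, hnm, hca, hcb⟩
        by_cases hbv : b = v
        · exact hnm (hbv ▸ Set.mem_insert _ _)
        have hbu : b ≠ u := fun h => (h ▸ hadj).ne rfl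
        have hpubv : pref u b v := hca v (Set.mem_insert _ _)
        obtain ⟨e, heM', hbe⟩ := hperfG' M' hM'S b hbu hbv
        obtain ⟨z, rfl⟩ := Sym2.mem_iff_exists.mp hbe
        have hz : pref b u z := hcb z (Set.mem_insert_of_mem _ heM')
        have hz' := hnuv _ heM'
        simp only [Sym2.mem_iff] at hz'
        exact key1 b z hbu hbv (fun h => hz'.1 (Or.inr h.symm))
          (fun h => hz'.2 (Or.inr h.symm)) hadj hpubv hz heM'
      have helperV : ∀ b, Blocks G pref M v b → False := by
        rintro b ⟨hadj, hnm, hca, hcb⟩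
        by_cases hbu : b = u
        · refine hnm ?_
          rw [hbu, Sym2.eq_swap]
          exact Set.mem_insert _ _
        have hbv : b ≠ v := fun h => (h ▸ hadj).ne rfl
        have hpvbu : pref v b u := hca u (by
          rw [Sym2.eq_swap]; exact Set.mem_insert _ _)
        obtain ⟨e, heM', hbe⟩ := hperfG' M' hM'S b hbu hbv
        obtain ⟨z, rfl⟩ := Sym2.mem_iff_exists.mp hbe
        have hz : pref b v z := hcb z (Set.mem_insert_of_mem _ heM')
        have hz' := hnuv _ heM'
        simp only [Sym2.mem_iff] at hz'
        exact key2 b z hbu hbv (fun h => hz'.1 (Or.inr h.symm))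
          (fun h => hz'.2 (Or.inr h.symm)) hadj hpvbu hz heM'
      intro a b hb
      by_cases hau : a = u
      · exact helperU b (hau ▸ hb)
      by_cases hbu : b = u
      · exact helperU a (hbu ▸ blocks_symm hb)
      by_cases hav : a = v
      · exact helperV b (hav ▸ hb)
      by_cases hbv : b = v
      · exact helperV a (hbv ▸ blocks_symm hb)
      obtain ⟨hadj, hnm, hca, hcb⟩ := hb
      by_cases hRin : s(a, b) ∈ RemovedEdges G pref u v
      · rcases hRin with (hRin | hRin) | hRin
        · rcases hRin with h | h <;> simp only [Sym2.mem_iff] at h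
          · rcases h with h | h
            · exact hau h.symm
            · exact hbu h.symm
          · rcases h with h | h
            · exact hav h.symm
            · exact hbv h.symm
        · obtain ⟨w, y, heq, hwu, hwv, hyu, hyv, h1, h2, h3⟩ := hRin
          have hcw : ∀ t, s(w, t) ∈ M → pref w y t := by
            rcases Sym2.eq_iff.mp heq with ⟨rfl, rfl⟩ | ⟨rfl, rfl⟩
            · exact hca
            · exact hcb
          obtain ⟨e, heM', hwe⟩ := hperfG' M' hM'S w hwu hwv
          obtain ⟨t, rfl⟩ := Sym2.mem_iff_exists.mp hwe
          have ht : pref w u t := hpref.trans w u y t h3 (hcw t (Set.mem_insert_of_mem _ heM'))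
          have ht' := hnuv _ heM'
          simp only [Sym2.mem_iff] at ht'
          exact key1 w t hwu hwv (fun h => ht'.1 (Or.inr h.symm))
            (fun h => ht'.2 (Or.inr h.symm)) h1 h2 ht heM'
        · obtain ⟨w, y, heq, hwu, hwv, hyu, hyv, h1, h2, h3⟩ := hRin
          have hcw : ∀ t, s(w, t) ∈ M → pref w y t := by
            rcases Sym2.eq_iff.mp heq with ⟨rfl, rfl⟩ | ⟨rfl, rfl⟩
            · exact hca
            · exact hcb
          obtain ⟨e, heM', hwe⟩ := hperfG' M' hM'S w hwu hwv
          obtain ⟨t, rfl⟩ := Sym2.mem_iff_exists.mp hwe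
          have ht : pref w v t := hpref.trans w v y t h3 (hcw t (Set.mem_insert_of_mem _ heM'))
          have ht' := hnuv _ heM'
          simp only [Sym2.mem_iff] at ht'
          exact key2 w t hwu hwv (fun h => ht'.1 (Or.inr h.symm))
            (fun h => ht'.2 (Or.inr h.symm)) h1 h2 ht heM'
      · refine hstab' a b ⟨?_, ?_, ?_, ?_⟩
        · rw [SimpleGraph.deleteEdges_adj]
          exact ⟨hadj, hRin⟩
        · exact fun h => hnm (Set.mem_insert_of_mem _ h)
        · exact fun z hz => hca z (Set.mem_insert_of_mem _ hz)
        · exact fun z hz => hcb z (Set.mem_insert_of_mem _ hz)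
    refine ⟨M, ⟨?_, ?_, hStabM⟩, Set.mem_insert _ _⟩
    · rintro e (rfl | he) f (rfl | hf) x hxe hxf
      · rfl
      · exfalso
        rcases Sym2.mem_iff.mp hxe with rfl | rfl
        · exact (hnuv f hf).1 hxf
        · exact (hnuv f hf).2 hxf
      · exfalso
        rcases Sym2.mem_iff.mp hxf with rfl | rfl
        · exact (hnuv e he).1 hxe
        · exact (hnuv e he).2 hxe
      · exact hmatch' e he f hf x hxe hxf
    · rintro e (rfl | he)
      · exact huv
      · have := hsub' he
        rw [SimpleGraph.edgeSet_deleteEdges] at this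
        exact this.1
end

section
/- Let (G, ≺) be a stable matching instance. Then the set of vertices matched by a stable matching is the same for every stable matching: if M and M' are stable matchings of (G, ≺), then a vertex v is covered by M if and only if v is covered by M'. -/
open SimpleGraph

variable {V : Type*} [Fintype V] [DecidableEq V]

section Aux

variable {G : SimpleGraph V} {pref : V → V → V → Prop} {M M' N N' : Set (Sym2 V)}

lemma adj_of_mem (hM : IsStable G pref M) {a b : V} (h : s(a,b) ∈ M) : G.Adj a b :=
  (SimpleGraph.mem_edgeSet G).1 (hM.2.1 h)

lemma match_eq (hM : IsMatch M) {a b c : V} (h1 : s(a,b) ∈ M) (h2 : s(a,c) ∈ M) :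
    b = c := by
  have h := hM _ h1 _ h2 a (by simp) (by simp)
  rw [Sym2.congr_right] at h
  exact h

/-- The key step lemma. -/
lemma step_lemma (hpref : StrictPrefs G pref) (hN : IsStable G pref N)
    (hN' : IsStable G pref N') {a b c : V}
    (hab : s(a,b) ∈ N) (hbc : s(b,c) ∈ N') (hp : pref b c a) :
    ∃ d, s(c,d) ∈ N ∧ pref c d b := by
  have hadjbc : G.Adj b c := adj_of_mem hN' hbc
  have hcbN : s(c,b) ∉ N := by
    intro hmem
    have : a = c := match_eq hN.1 (by rwa [Sym2.eq_swap] at hab) (by rwa [Sym2.eq_swap] at hmem)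
    exact hpref.irrefl b c (this ▸ hp)
  have hb : ∀ w, s(b,w) ∈ N → pref b c w := by
    intro w hw
    have : a = w := match_eq hN.1 (by rwa [Sym2.eq_swap] at hab) hw
    exact this ▸ hp
  have hnb := hN.2.2 c b
  by_contra hgoal
  push_neg at hgoal
  refine hnb ⟨hadjbc.symm, hcbN, ?_, hb⟩
  intro w hw
  have hwb : w ≠ b := fun h => hcbN (h ▸ hw)
  rcases hpref.total c w b (adj_of_mem hN hw) hadjbc.symm hwb with h | h
  · exact absurd h (hgoal w hw)
  · exact h

/-- Base: start of the alternating sequence. -/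
lemma base_lemma (hpref : StrictPrefs G pref) (hM : IsStable G pref M)
    (hM' : IsStable G pref M') {v u : V} (hv' : ¬ Covers M' v)
    (hvu : s(v,u) ∈ M) : ∃ w, s(u,w) ∈ M' ∧ pref u w v := by
  have hadj : G.Adj v u := adj_of_mem hM hvu
  have huv' : s(u,v) ∉ M' := fun h => hv' ⟨_, h, by simp⟩
  have hvcl : ∀ w, s(v,w) ∈ M' → pref v u w := by
    intro w hw; exact absurd ⟨_, hw, by simp⟩ hv'
  have hnb := hM'.2.2 u v
  by_contra hgoal
  push_neg at hgoal
  refine hnb ⟨hadj.symm, huv', ?_, hvcl⟩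
  intro w hw
  have hwv : w ≠ v := fun h => huv' (h ▸ hw)
  rcases hpref.total u w v (adj_of_mem hM' hw) hadj.symm hwv with h | h
  · exact absurd h (hgoal w hw)
  · exact h

/-- Existence of the infinite alternating sequence. -/
lemma exists_seq (hpref : StrictPrefs G pref) (hM : IsStable G pref M)
    (hM' : IsStable G pref M') {v u : V} (hv' : ¬ Covers M' v)
    (hvu : s(v,u) ∈ M) :
    ∃ a : ℕ → V, a 0 = v ∧
      (∀ n, s(a n, a (n+1)) ∈ (if Even n then M else M')) ∧
      (∀ n, pref (a (n+1)) (a (n+2)) (a n)) := by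
  obtain ⟨w0, hw0, hpw0⟩ := base_lemma hpref hM hM' hv' hvu
  set Mat : ℕ → Set (Sym2 V) := fun n => if Even n then M else M' with hMat
  have hMatStable : ∀ n, IsStable G pref (Mat n) := by
    intro n; by_cases h : Even n <;> simp [hMat, h, hM, hM']
  have hMatAlt : ∀ n, Mat (n+2) = Mat n := by
    intro n; simp [hMat, Nat.even_add_one, parity_simps]
  set Inv : ℕ → V × V × V → Prop := fun n t =>
    s(t.1, t.2.1) ∈ Mat n ∧ s(t.2.1, t.2.2) ∈ Mat (n+1) ∧ pref t.2.1 t.2.2 t.1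
    with hInv
  have hbase : Inv 0 (v, u, w0) := by
    refine ⟨?_, ?_, hpw0⟩
    · simpa [hMat] using hvu
    · simpa [hMat] using hw0
  have hstep : ∀ n (t : V × V × V), Inv n t → ∃ d, Inv (n+1) (t.2.1, t.2.2, d) := by
    rintro n ⟨a, b, c⟩ ⟨h1, h2, h3⟩
    obtain ⟨d, hd, hpd⟩ := step_lemma hpref (hMatStable n) (hMatStable (n+1)) h1 h2 h3
    exact ⟨d, h2, by rw [hMatAlt]; exact hd, hpd⟩
  let f : ∀ n : ℕ, {t : V × V × V // Inv n t} := fun n =>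
    Nat.rec ⟨(v, u, w0), hbase⟩
      (fun n p => ⟨(p.1.2.1, p.1.2.2, Classical.choose (hstep n p.1 p.2)),
        Classical.choose_spec (hstep n p.1 p.2)⟩) n
  refine ⟨fun n => (f n).1.1, rfl, ?_, ?_⟩
  · intro n
    exact (f n).2.1
  · intro n
    exact (f n).2.2.2

lemma covered_mono (hpref : StrictPrefs G pref) (hM : IsStable G pref M)
    (hM' : IsStable G pref M') {v : V} (hv : Covers M v) (hv' : ¬ Covers M' v) :
    False := by
  classical
  obtain ⟨e, heM, hve⟩ := hv
  have hexu : ∃ u, s(v, u) ∈ M := by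
    induction e with
    | _ x y =>
      rcases Sym2.mem_iff.1 hve with rfl | rfl
      · exact ⟨y, heM⟩
      · exact ⟨x, by rwa [Sym2.eq_swap]⟩
  obtain ⟨u, hvu⟩ := hexu
  obtain ⟨a, ha0, hedge, hp⟩ := exists_seq hpref hM hM' hv' hvu
  have hIM : ∀ n : ℕ, IsMatch (if Even n then M else M' : Set (Sym2 V)) := by
    intro n
    by_cases h : Even n
    · rw [if_pos h]; exact hM.1
    · rw [if_neg h]; exact hM'.1
  have hcongr : ∀ p q : ℕ, (Even p ↔ Even q) →
      (if Even p then M else M' : Set (Sym2 V)) = (if Even q then M else M') := by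
    intro p q h
    by_cases hp' : Even p
    · rw [if_pos hp', if_pos (h.1 hp')]
    · rw [if_neg hp', if_neg (fun hq => hp' (h.2 hq))]
  have hAdj : ∀ n, G.Adj (a n) (a (n+1)) := by
    intro n
    have h := hedge n
    by_cases hn : Even n
    · rw [if_pos hn] at h; exact adj_of_mem hM h
    · rw [if_neg hn] at h; exact adj_of_mem hM' h
  have hex : ∃ j, ∃ i, i < j ∧ a i = a j := by
    obtain ⟨x, y, hxy, haxy⟩ := Finite.exists_ne_map_eq_of_infinite a
    rcases hxy.lt_or_gt with h | h
    · exact ⟨y, x, h, haxy⟩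
    · exact ⟨x, y, h, haxy.symm⟩
  obtain ⟨i, hij, heq⟩ := Nat.find_spec hex
  set j := Nat.find hex with hj
  have hmin : ∀ k, k < j → ¬ ∃ i, i < k ∧ a i = a k := fun k hk => Nat.find_min hex hk
  clear_value j
  have hj1 : j ≠ i + 1 := by
    rintro hji
    rw [hji] at heq
    exact (hAdj i).ne heq
  have hj2 : j ≠ i + 2 := by
    rintro hji
    rw [hji] at heq
    have := hp i
    rw [← heq] at this
    exact hpref.irrefl _ _ this
  have h3 : i + 3 ≤ j := by omega
  obtain ⟨m, rfl⟩ : ∃ m, j = m + 1 := ⟨j - 1, by omega⟩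
  have him : i + 2 ≤ m := by omega
  have hEm := hedge m
  -- heq : a i = a (m+1)
  by_cases hpar : Even m ↔ Even i
  · have hEi := hedge i
    rw [hcongr m i hpar] at hEm
    have heqe : s(a m, a (m+1)) = s(a i, a (i+1)) := by
      refine hIM i _ hEm _ hEi (a i) ?_ (by simp)
      rw [heq]; simp
    rcases Sym2.eq_iff.1 heqe with ⟨h1, h2⟩ | ⟨h1, h2⟩
    · exact hmin m (by omega) ⟨i, by omega, h1.symm⟩
    · exact hmin m (by omega) ⟨i + 1, by omega, h1.symm⟩
  · rcases Nat.eq_zero_or_pos i with hi0 | hi0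
    · subst hi0
      have hm : ¬ Even m := fun h => hpar (by simp [h])
      rw [if_neg hm] at hEm
      refine hv' ⟨_, hEm, ?_⟩
      rw [← ha0, heq]; simp
    · obtain ⟨i', rfl⟩ : ∃ i', i = i' + 1 := ⟨i - 1, by omega⟩
      have hEi' := hedge i'
      have hpar' : Even i' ↔ Even m := by
        rw [Nat.even_add_one] at hpar
        tauto
      rw [hcongr i' m hpar'] at hEi'
      have heqe : s(a i', a (i' + 1)) = s(a m, a (m + 1)) := by
        refine hIM m _ hEi' _ hEm (a (i' + 1)) (by simp) ?_
        rw [← heq]; simp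
      rcases Sym2.eq_iff.1 heqe with ⟨h1, h2⟩ | ⟨h1, h2⟩
      · exact hmin m (by omega) ⟨i', by omega, h1⟩
      · exact hmin m (by omega) ⟨i' + 1, by omega, h2⟩

end Aux

/-- the set of vertices covered is the same in every stable matching. -/
theorem same_covered_vertices (G : SimpleGraph V) (pref : V → V → V → Prop)
    (hpref : StrictPrefs G pref) (M M' : Set (Sym2 V))
    (hM : IsStable G pref M) (hM' : IsStable G pref M') (v : V) :
    Covers M v ↔ Covers M' v := by
  constructor
  · intro h
    by_contra h'
    exact covered_mono hpref hM hM' h h'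
  · intro h
    by_contra h'
    exact covered_mono hpref hM' hM h h'
end

section
/- Let (G, ≺) be a stable matching instance and let FSM(G,≺) = {x ∈ ℝ^E : x ≥ 0, x(δ(v)) ≤ 1 for all v, x(φ(e)) ≥ 1 for all e ∈ E} be the fractional stable matching polytope. If x ∈ FSM(G,≺) and e ∈ E satisfies x_e > 0, then x(φ(e)) = 1. -/
open SimpleGraph

variable {V : Type*} [Fintype V] [DecidableEq V]

section Aux

open scoped Classical

variable (G : SimpleGraph V) (pref : V → V → V → Prop)

lemma Phi_comm (u v : V) : Phi G pref u v = Phi G pref v u := by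
  ext f
  simp only [Phi, Set.mem_setOf_eq]
  constructor <;> rintro ⟨hf, h⟩ <;> refine ⟨hf, ?_⟩ <;>
    rcases h with h | h | h
  · left; rw [h, Sym2.eq_swap]
  · right; right; exact h
  · right; left; exact h
  · left; rw [h, Sym2.eq_swap]
  · right; right; exact h
  · right; left; exact h

/-- `f` dominates-or-equals `e` (at some endpoint of `e`). -/
def InPhi (e f : Sym2 V) : Prop := ∃ a b, e = s(a, b) ∧ f ∈ Phi G pref a b

lemma inPhi_iff (u v : V) (f : Sym2 V) :
    InPhi G pref s(u, v) f ↔ f ∈ Phi G pref u v := by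
  constructor
  · rintro ⟨a, b, hab, hf⟩
    rw [Sym2.eq_iff] at hab
    rcases hab with ⟨rfl, rfl⟩ | ⟨rfl, rfl⟩
    · exact hf
    · rwa [Phi_comm]
  · exact fun h => ⟨u, v, rfl, h⟩

lemma inPhi_core {u v b : V} (huv : G.Adj u v) (hub : G.Adj u b) (hvb : v ≠ b) :
    InPhi G pref s(u, v) s(u, b) ↔ pref u b v := by
  rw [inPhi_iff]
  simp only [Phi, Set.mem_setOf_eq]
  constructor
  · rintro ⟨-, h | ⟨w, hw, hp⟩ | ⟨w, hw, hp⟩⟩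
    · rw [Sym2.eq_iff] at h
      rcases h with ⟨-, h⟩ | ⟨h, -⟩
      · exact absurd h.symm hvb
      · exact absurd h huv.ne
    · rw [Sym2.eq_iff] at hw
      rcases hw with ⟨-, rfl⟩ | ⟨rfl, h⟩
      · exact hp
      · exact absurd h.symm hub.ne
    · rw [Sym2.eq_iff] at hw
      rcases hw with ⟨h, -⟩ | ⟨-, h⟩
      · exact absurd h huv.ne
      · exact absurd h.symm hvb
  · intro hp
    exact ⟨G.mem_edgeSet.mpr hub, Or.inr (Or.inl ⟨b, rfl, hp⟩)⟩

lemma inPhi_pair (hpref : StrictPrefs G pref) {u v b : V}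
    (huv : G.Adj u v) (hub : G.Adj u b) (hvb : v ≠ b) :
    (if InPhi G pref s(u, v) s(u, b) then (1:ℝ) else 0)
      + (if InPhi G pref s(u, b) s(u, v) then (1:ℝ) else 0) = 1 := by
  rw [if_congr (inPhi_core G pref huv hub hvb) rfl rfl,
    if_congr (inPhi_core G pref hub huv hvb.symm) rfl rfl]
  have hnot : ¬ (pref u b v ∧ pref u v b) := by
    rintro ⟨h1, h2⟩
    exact hpref.irrefl u b (hpref.trans u b v b h1 h2)
  rcases hpref.total u b v hub huv (fun h => hvb h.symm) with h | h
  · rw [if_pos h, if_neg (fun h' => hnot ⟨h, h'⟩), add_zero]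
  · rw [if_neg (fun h' => hnot ⟨h', h⟩), if_pos h, zero_add]

lemma inPhi_share {e f : Sym2 V} (h : InPhi G pref e f) : ∃ w, w ∈ e ∧ w ∈ f := by
  obtain ⟨a, b, rfl, hf⟩ := h
  simp only [Phi, Set.mem_setOf_eq] at hf
  rcases hf.2 with h | ⟨w, rfl, -⟩ | ⟨w, rfl, -⟩
  · exact ⟨a, Sym2.mem_mk_left a b, h ▸ Sym2.mem_mk_left a b⟩
  · exact ⟨a, Sym2.mem_mk_left a b, Sym2.mem_mk_left a w⟩
  · exact ⟨b, Sym2.mem_mk_right a b, Sym2.mem_mk_left b w⟩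

lemma inPhi_self {e : Sym2 V} (he : e ∈ G.edgeSet) : InPhi G pref e e := by
  induction e using Sym2.ind with | _ a b =>
  exact ⟨a, b, rfl, he, Or.inl rfl⟩

lemma sum_mem_ind {e : Sym2 V} (he : e ∈ G.edgeSet) :
    (∑ w : V, if w ∈ e then (1:ℝ) else 0) = 2 := by
  induction e using Sym2.ind with | _ a b =>
  have hab : a ≠ b := (G.mem_edgeSet.mp he).ne
  have : ∀ w : V, (if w ∈ s(a, b) then (1:ℝ) else 0)
      = (if w = a then (1:ℝ) else 0) + (if w = b then (1:ℝ) else 0) := by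
    intro w
    by_cases h1 : w = a
    · subst h1; simp [Sym2.mem_iff, hab]
    · by_cases h2 : w = b <;> simp [Sym2.mem_iff, h1, h2, Ne.symm hab]
  rw [Finset.sum_congr rfl fun w _ => this w, Finset.sum_add_distrib]
  simp
  norm_num

lemma ind_add (hpref : StrictPrefs G pref) {a b c d : V}
    (he : G.Adj a b) (hf : G.Adj c d) :
    (if InPhi G pref s(a, b) s(c, d) then (1:ℝ) else 0)
      + (if InPhi G pref s(c, d) s(a, b) then (1:ℝ) else 0)
      = ∑ w : V, if w ∈ s(a, b) ∧ w ∈ s(c, d) then (1:ℝ) else 0 := by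
  by_cases hef : s(a, b) = s(c, d)
  · rw [← hef]
    have he' : s(a, b) ∈ G.edgeSet := G.mem_edgeSet.mpr he
    rw [if_pos (inPhi_self G pref he')]
    simp only [and_self]
    rw [sum_mem_ind G he']
    norm_num
  · by_cases hshare : ∃ w, w ∈ s(a, b) ∧ w ∈ s(c, d)
    · obtain ⟨w0, hw0e, hw0f⟩ := hshare
      have hRHS : (∑ w : V, if w ∈ s(a, b) ∧ w ∈ s(c, d) then (1:ℝ) else 0) = 1 := by
        rw [Finset.sum_eq_single_of_mem w0 (Finset.mem_univ w0)]
        · rw [if_pos ⟨hw0e, hw0f⟩]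
        · intro w _ hw
          rw [if_neg]
          rintro ⟨hwe, hwf⟩
          exact hef (((Sym2.mem_and_mem_iff hw).mp ⟨hwe, hw0e⟩).trans
            ((Sym2.mem_and_mem_iff hw).mp ⟨hwf, hw0f⟩).symm)
      rw [hRHS]
      rw [Sym2.mem_iff] at hw0e hw0f
      rcases hw0e with rfl | rfl <;> rcases hw0f with h | h
      · -- w0 = a = c
        subst h
        have hbd : b ≠ d := fun h => hef (by rw [h])
        exact inPhi_pair G pref hpref he hf hbd
      · -- w0 = a = d
        subst h
        rw [show s(c, w0) = s(w0, c) from Sym2.eq_swap]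
        have hbc : b ≠ c := fun h => hef (by rw [h, Sym2.eq_swap])
        exact inPhi_pair G pref hpref he hf.symm hbc
      · -- w0 = b = c
        subst h
        rw [show s(a, w0) = s(w0, a) from Sym2.eq_swap]
        have had : a ≠ d := fun h => hef (by rw [h]; exact Sym2.eq_swap)
        exact inPhi_pair G pref hpref he.symm hf had
      · -- w0 = b = d
        subst h
        rw [show s(a, w0) = s(w0, a) from Sym2.eq_swap,
          show s(c, w0) = s(w0, c) from Sym2.eq_swap]
        have hac : a ≠ c := fun h => hef (by rw [h])
        exact inPhi_pair G pref hpref he.symm hf.symm hac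
    · rw [if_neg (fun h => hshare (inPhi_share G pref h)),
        if_neg (fun h => hshare (by
          obtain ⟨w, hw1, hw2⟩ := inPhi_share G pref h
          exact ⟨w, hw2, hw1⟩))]
      rw [Finset.sum_eq_zero fun w _ => if_neg (fun h => hshare ⟨w, h⟩)]
      norm_num

lemma ind_add' (hpref : StrictPrefs G pref) {e f : Sym2 V}
    (he : e ∈ G.edgeSet) (hf : f ∈ G.edgeSet) :
    (if InPhi G pref e f then (1:ℝ) else 0) + (if InPhi G pref f e then (1:ℝ) else 0)
      = ∑ w : V, if w ∈ e ∧ w ∈ f then (1:ℝ) else 0 := by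
  revert he
  induction e using Sym2.ind with | _ a b =>
  intro he
  revert hf
  induction f using Sym2.ind with | _ c d =>
  intro hf
  exact ind_add G pref hpref (G.mem_edgeSet.mp he) (G.mem_edgeSet.mp hf)

end Aux


/-- if `x ∈ FSM(G,≺)` and `x_e > 0` for an edge `e = uv`, then
`x(φ(e)) = 1`. -/
theorem phi_tight_on_support (G : SimpleGraph V) (pref : V → V → V → Prop)
    (hpref : StrictPrefs G pref) (x : Sym2 V → ℝ) (hx : InFSM G pref x)
    (u v : V) (huv : G.Adj u v) (hpos : 0 < x s(u, v)) :
    phiSum G pref x u v = 1 := by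
  classical
  obtain ⟨hx0, -, hxdeg, hxphi⟩ := hx
  set P : Sym2 V → ℝ := fun e => ∑ f ∈ G.edgeFinset, if InPhi G pref e f then x f else 0
    with hPdef
  have hP : ∀ a b : V, P s(a, b) = phiSum G pref x a b := by
    intro a b
    simp only [hPdef, phiSum]
    exact Finset.sum_congr rfl fun f _ => if_congr (inPhi_iff G pref a b f) rfl rfl
  have hP1 : ∀ e ∈ G.edgeFinset, 1 ≤ P e := by
    intro e heE
    revert heE
    induction e using Sym2.ind with | _ a b =>
    intro heE
    rw [hP a b]
    exact hxphi a b (G.mem_edgeSet.mp (mem_edgeFinset.mp heE))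
  have hd0 : ∀ w : V, 0 ≤ degSum G x w := by
    intro w
    refine Finset.sum_nonneg fun e _ => ?_
    split_ifs
    exacts [hx0 e, le_refl 0]
  -- 2 * Σ_e x_e * P e = Σ_w d_w^2
  have hA : 2 * (∑ e ∈ G.edgeFinset, x e * P e)
      = ∑ w : V, degSum G x w * degSum G x w := by
    have step1 : (∑ e ∈ G.edgeFinset, x e * P e)
        = ∑ e ∈ G.edgeFinset, ∑ f ∈ G.edgeFinset,
            (if InPhi G pref e f then (1:ℝ) else 0) * (x e * x f) := by
      refine Finset.sum_congr rfl fun e _ => ?_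
      rw [hPdef, Finset.mul_sum]
      refine Finset.sum_congr rfl fun f _ => ?_
      split_ifs <;> ring
    have step2 : (∑ e ∈ G.edgeFinset, x e * P e)
        = ∑ e ∈ G.edgeFinset, ∑ f ∈ G.edgeFinset,
            (if InPhi G pref f e then (1:ℝ) else 0) * (x e * x f) := by
      rw [step1, Finset.sum_comm]
      refine Finset.sum_congr rfl fun e _ => Finset.sum_congr rfl fun f _ => ?_
      ring
    calc 2 * (∑ e ∈ G.edgeFinset, x e * P e)
        = (∑ e ∈ G.edgeFinset, ∑ f ∈ G.edgeFinset,
            (if InPhi G pref e f then (1:ℝ) else 0) * (x e * x f))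
          + (∑ e ∈ G.edgeFinset, ∑ f ∈ G.edgeFinset,
            (if InPhi G pref f e then (1:ℝ) else 0) * (x e * x f)) := by
          rw [← step1, ← step2]; ring
      _ = ∑ e ∈ G.edgeFinset, ∑ f ∈ G.edgeFinset,
            ((if InPhi G pref e f then (1:ℝ) else 0)
              + (if InPhi G pref f e then (1:ℝ) else 0)) * (x e * x f) := by
          rw [← Finset.sum_add_distrib]
          refine Finset.sum_congr rfl fun e _ => ?_
          rw [← Finset.sum_add_distrib]
          refine Finset.sum_congr rfl fun f _ => ?_
          ring
      _ = ∑ e ∈ G.edgeFinset, ∑ f ∈ G.edgeFinset,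
            (∑ w : V, if w ∈ e ∧ w ∈ f then (1:ℝ) else 0) * (x e * x f) := by
          refine Finset.sum_congr rfl fun e heE => Finset.sum_congr rfl fun f hfE => ?_
          rw [ind_add' G pref hpref (mem_edgeFinset.mp heE) (mem_edgeFinset.mp hfE)]
      _ = ∑ e ∈ G.edgeFinset, ∑ f ∈ G.edgeFinset, ∑ w : V,
            (if w ∈ e ∧ w ∈ f then (1:ℝ) else 0) * (x e * x f) := by
          refine Finset.sum_congr rfl fun e _ => Finset.sum_congr rfl fun f _ => ?_
          rw [Finset.sum_mul]
      _ = ∑ e ∈ G.edgeFinset, ∑ w : V, ∑ f ∈ G.edgeFinset,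
            (if w ∈ e ∧ w ∈ f then (1:ℝ) else 0) * (x e * x f) :=
          Finset.sum_congr rfl fun e _ => Finset.sum_comm
      _ = ∑ w : V, ∑ e ∈ G.edgeFinset, ∑ f ∈ G.edgeFinset,
            (if w ∈ e ∧ w ∈ f then (1:ℝ) else 0) * (x e * x f) := Finset.sum_comm
      _ = ∑ w : V, degSum G x w * degSum G x w := by
          refine Finset.sum_congr rfl fun w _ => ?_
          simp only [degSum]
          rw [Finset.sum_mul_sum]
          refine Finset.sum_congr rfl fun e _ => Finset.sum_congr rfl fun f _ => ?_
          by_cases h1 : w ∈ e <;> by_cases h2 : w ∈ f <;> simp [h1, h2]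
  -- Σ_w d_w = 2 * Σ_e x_e
  have hsum2 : ∑ w : V, degSum G x w = 2 * ∑ e ∈ G.edgeFinset, x e := by
    simp only [degSum]
    rw [Finset.sum_comm, Finset.mul_sum]
    refine Finset.sum_congr rfl fun e heE => ?_
    have h1 : (∑ w : V, if w ∈ e then x e else 0)
        = (∑ w : V, if w ∈ e then (1:ℝ) else 0) * x e := by
      rw [Finset.sum_mul]
      refine Finset.sum_congr rfl fun w _ => ?_
      split_ifs <;> ring
    rw [h1, sum_mem_ind G (mem_edgeFinset.mp heE)]
  set S := ∑ e ∈ G.edgeFinset, x e * (P e - 1) with hS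
  have hterm_nonneg : ∀ e ∈ G.edgeFinset, 0 ≤ x e * (P e - 1) := fun e heE =>
    mul_nonneg (hx0 e) (by linarith [hP1 e heE])
  have hS0 : 0 ≤ S := Finset.sum_nonneg hterm_nonneg
  have hS1 : S ≤ 0 := by
    have hexp : S = (∑ e ∈ G.edgeFinset, x e * P e) - ∑ e ∈ G.edgeFinset, x e := by
      rw [hS, ← Finset.sum_sub_distrib]
      exact Finset.sum_congr rfl fun e _ => by ring
    have h2S : 2 * S = ∑ w : V, (degSum G x w * degSum G x w - degSum G x w) := by
      rw [hexp, Finset.sum_sub_distrib, mul_sub, hA]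
      rw [← hsum2]
    have hle : (∑ w : V, (degSum G x w * degSum G x w - degSum G x w)) ≤ 0 := by
      refine Finset.sum_nonpos fun w _ => ?_
      nlinarith [hd0 w, hxdeg w]
    linarith
  have hSzero : S = 0 := le_antisymm hS1 hS0
  have hterm := (Finset.sum_eq_zero_iff_of_nonneg hterm_nonneg).mp hSzero
    s(u, v) (mem_edgeFinset.mpr (G.mem_edgeSet.mpr huv))
  have hP1' : P s(u, v) = 1 := by
    rcases mul_eq_zero.mp hterm with h | h
    · exact absurd h (ne_of_gt hpos)
    · linarith
  rw [← hP u v, hP1']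
end

section
/- Let (G, ≺) be a stable matching instance in which the set of vertices covered is the same for every point of FSM(G,≺) (every vertex satisfies x(δ(v)) = 1). Let x be a half-integral point of FSM(G,≺) (x_e ∈ {0, 1/2, 1}). Then the support of x consists of vertex-disjoint single edges (value 1) and cycles (value 1/2 on each cycle edge), and every cycle in the support has cyclic preferences: along the cycle v_1,…,v_m, either v_{i+1} ≺_{v_i} v_{i-1} for all i or v_{i-1} ≺_{v_i} v_{i+1} for all i (indices mod m). -/
open SimpleGraph

variable {V : Type*} [Fintype V] [DecidableEq V]

lemma vertex_structure (G : SimpleGraph V) (x : Sym2 V → ℝ) (hx0 : ∀ e, 0 ≤ x e)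
    (hxE : ∀ e, e ∉ G.edgeSet → x e = 0)
    (htight : ∀ v, degSum G x v = 1)
    (hhalf : ∀ e, x e = 0 ∨ x e = 1 / 2 ∨ x e = 1) (v : V) :
    (∃ e, v ∈ e ∧ x e = 1 ∧ ∀ f, v ∈ f → x f ≠ 0 → f = e) ∨
    (∃ e f, e ≠ f ∧ v ∈ e ∧ v ∈ f ∧ x e = 1 / 2 ∧ x f = 1 / 2 ∧
      ∀ g, v ∈ g → x g ≠ 0 → g = e ∨ g = f) := by
  classical
  set S := G.edgeFinset.filter (fun e => v ∈ e ∧ x e ≠ 0) with hS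
  have hmemS : ∀ f, v ∈ f → x f ≠ 0 → f ∈ S := by
    intro f hvf hxf
    refine Finset.mem_filter.mpr ⟨?_, hvf, hxf⟩
    rw [SimpleGraph.mem_edgeFinset]
    by_contra h
    exact hxf (hxE f h)
  have hsum : ∑ e ∈ S, x e = 1 := by
    rw [← htight v]
    unfold degSum
    rw [hS, Finset.sum_filter]
    apply Finset.sum_congr rfl
    intro e _
    by_cases h1 : v ∈ e
    · by_cases h2 : x e = 0 <;> simp [h1, h2]
    · simp [h1]
  by_cases hone : ∃ e ∈ S, x e = 1
  · obtain ⟨e, heS, hxe⟩ := hone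
    left
    have hrest : ∑ f ∈ S.erase e, x f = 0 := by
      have h := Finset.add_sum_erase S x heS
      rw [hxe] at h
      linarith [hsum, h]
    have hzero : ∀ f ∈ S.erase e, x f = 0 := by
      intro f hf
      have := (Finset.sum_eq_zero_iff_of_nonneg (fun g _ => hx0 g)).mp hrest f hf
      exact this
    refine ⟨e, (Finset.mem_filter.mp heS).2.1, hxe, ?_⟩
    intro f hvf hxf
    by_contra hne
    exact hxf (hzero f (Finset.mem_erase.mpr ⟨hne, hmemS f hvf hxf⟩))
  · right
    push_neg at hone
    have hhalfS : ∀ e ∈ S, x e = 1 / 2 := by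
      intro e heS
      rcases hhalf e with h | h | h
      · exact absurd h (Finset.mem_filter.mp heS).2.2
      · exact h
      · exact absurd h (hone e heS)
    have hcard : (S.card : ℝ) * (1 / 2) = 1 := by
      have h2 : ∑ e ∈ S, x e = S.card • ((1:ℝ)/2) := by
        rw [Finset.sum_congr rfl hhalfS, Finset.sum_const]
      rw [hsum] at h2
      rw [nsmul_eq_mul] at h2
      linarith
    have hcard2 : S.card = 2 := by
      have : (S.card : ℝ) = 2 := by linarith
      exact_mod_cast this
    obtain ⟨e, f, hef, hSef⟩ := Finset.card_eq_two.mp hcard2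
    have heS : e ∈ S := by rw [hSef]; simp
    have hfS : f ∈ S := by rw [hSef]; simp
    refine ⟨e, f, hef, (Finset.mem_filter.mp heS).2.1, (Finset.mem_filter.mp hfS).2.1,
      hhalfS e heS, hhalfS f hfS, ?_⟩
    intro g hvg hxg
    have := hmemS g hvg hxg
    rw [hSef] at this
    simpa using this

/-- a half-integral point of `FSM(G,≺)` with `x(δ(v)) = 1` for all `v`
has support consisting of vertex-disjoint single edges of value `1` and cycles of
value `1/2`, and every cycle in the support has cyclic preferences. -/
theorem half_integral_support_structure (G : SimpleGraph V)
    (pref : V → V → V → Prop) (hpref : StrictPrefs G pref)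
    (x : Sym2 V → ℝ) (hx : InFSM G pref x)
    (htight : ∀ v, degSum G x v = 1)
    (hhalf : ∀ e, x e = 0 ∨ x e = 1 / 2 ∨ x e = 1) :
    (∀ v : V,
      (∃ e, v ∈ e ∧ x e = 1 ∧ ∀ f, v ∈ f → x f ≠ 0 → f = e) ∨
      (∃ e f, e ≠ f ∧ v ∈ e ∧ v ∈ f ∧ x e = 1 / 2 ∧ x f = 1 / 2 ∧
        ∀ g, v ∈ g → x g ≠ 0 → g = e ∨ g = f)) ∧
    (∀ (m : ℕ), 3 ≤ m → ∀ c : ZMod m → V, Function.Injective c →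
      (∀ i, x s(c i, c (i + 1)) = 1 / 2) →
      ((∀ i, pref (c i) (c (i + 1)) (c (i - 1))) ∨
        (∀ i, pref (c i) (c (i - 1)) (c (i + 1))))) := by
  classical
  obtain ⟨hx0, hxE, _, hphi⟩ := hx
  have hvert := vertex_structure G x hx0 hxE htight hhalf
  refine ⟨hvert, ?_⟩
  intro m hm c hc hcyc
  haveI : NeZero m := ⟨by omega⟩
  have hasym : ∀ v a b, pref v a b → ¬ pref v b a := fun v a b h1 h2 =>
    hpref.irrefl v a (hpref.trans v a b a h1 h2)
  have key : ∀ k : ZMod m, k ≠ 0 → ∀ i, c i ≠ c (i + k) := by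
    intro k hk i hci
    have h0 := hc hci
    apply hk
    have h1 : i + k - i = i - i := by rw [← h0]
    linear_combination h1
  have h1z : (1 : ZMod m) ≠ 0 := by
    intro h
    have : ((1 : ℕ) : ZMod m) = 0 := by exact_mod_cast h
    rw [ZMod.natCast_eq_zero_iff] at this
    have := Nat.le_of_dvd (by norm_num) this
    omega
  have h2z : (2 : ZMod m) ≠ 0 := by
    intro h
    have : ((2 : ℕ) : ZMod m) = 0 := by exact_mod_cast h
    rw [ZMod.natCast_eq_zero_iff] at this
    have := Nat.le_of_dvd (by norm_num) this
    omega
  have hneighbor : ∀ i : ZMod m, c i ≠ c (i + 1) := fun i => key 1 h1z i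
  have hprevne : ∀ i : ZMod m, c (i - 1) ≠ c i := by
    intro i
    have := key 1 h1z (i - 1)
    rwa [show i - 1 + 1 = i from by ring] at this
  have hskip : ∀ i : ZMod m, c (i - 1) ≠ c (i + 1) := by
    intro i
    have := key 2 h2z (i - 1)
    rwa [show i - 1 + 2 = i + 1 from by ring] at this
  have hprevval : ∀ i : ZMod m, x s(c (i - 1), c i) = 1 / 2 := by
    intro i
    have := hcyc (i - 1)
    rwa [show i - 1 + 1 = i from by ring] at this
  have hadj : ∀ i, G.Adj (c i) (c (i + 1)) := by
    intro i
    have hne : x s(c i, c (i + 1)) ≠ 0 := by rw [hcyc i]; norm_num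
    have hmem : s(c i, c (i + 1)) ∈ G.edgeSet := by
      by_contra h; exact hne (hxE _ h)
    exact (SimpleGraph.mem_edgeSet G).mp hmem
  -- support structure at each cycle vertex
  have hloc : ∀ i : ZMod m, ∀ g, c i ∈ g → x g ≠ 0 →
      g = s(c (i - 1), c i) ∨ g = s(c i, c (i + 1)) := by
    intro i g hvg hxg
    have hEne : s(c (i - 1), c i) ≠ s(c i, c (i + 1)) := by
      intro h
      rcases Sym2.eq_iff.mp h with ⟨h1, _⟩ | ⟨h1, _⟩
      · exact hprevne i h1
      · exact hskip i h1
    rcases hvert (c i) with ⟨e, _, hxe, huniq⟩ | ⟨e, f, hef, _, _, hxe, hxf, huniq⟩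
    · exfalso
      have h1 : s(c (i - 1), c i) = e :=
        huniq _ (by simp) (by rw [hprevval i]; norm_num)
      have h2 := hprevval i
      rw [h1, hxe] at h2
      norm_num at h2
    · have hA := huniq s(c (i - 1), c i) (by simp) (by rw [hprevval i]; norm_num)
      have hB := huniq s(c i, c (i + 1)) (by simp) (by rw [hcyc i]; norm_num)
      have hG := huniq g hvg hxg
      rcases hA with hA | hA <;> rcases hB with hB | hB
      · exact absurd (hA.trans hB.symm) hEne
      · rcases hG with hG | hG
        · exact Or.inl (hG.trans hA.symm)
        · exact Or.inr (hG.trans hB.symm)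
      · rcases hG with hG | hG
        · exact Or.inr (hG.trans hB.symm)
        · exact Or.inl (hG.trans hA.symm)
      · exact absurd (hA.trans hB.symm) hEne
  -- LP constraint gives: prev dominates at c i, or next-next dominates at c (i+1)
  have hPQ : ∀ i : ZMod m,
      pref (c i) (c (i - 1)) (c (i + 1)) ∨ pref (c (i + 1)) (c (i + 2)) (c i) := by
    intro i
    by_contra hcon
    push_neg at hcon
    obtain ⟨hA, hB⟩ := hcon
    have hmemE : s(c i, c (i + 1)) ∈ G.edgeFinset :=
      (SimpleGraph.mem_edgeFinset).mpr ((SimpleGraph.mem_edgeSet G).mpr (hadj i))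
    have hlt : phiSum G pref x (c i) (c (i + 1)) = 1 / 2 := by
      unfold phiSum
      rw [Finset.sum_eq_single_of_mem (s(c i, c (i + 1))) hmemE]
      · rw [if_pos, hcyc i]
        exact ⟨(SimpleGraph.mem_edgeSet G).mpr (hadj i), Or.inl rfl⟩
      · intro b _ hbne
        split_ifs with hbPhi
        · obtain ⟨hbE, hcase⟩ := hbPhi
          by_contra hxb
          rcases hcase with h | ⟨w, hw, hpw⟩ | ⟨w, hw, hpw⟩
          · exact hbne h
          · have hvb : c i ∈ b := by rw [hw]; simp
            rcases hloc i b hvb hxb with h | h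
            · rw [hw] at h
              rcases Sym2.eq_iff.mp h with ⟨h1, _⟩ | ⟨_, h2⟩
              · exact hprevne i h1.symm
              · rw [h2] at hpw; exact hA hpw
            · exact hbne h
          · have hvb : c (i + 1) ∈ b := by rw [hw]; simp
            rcases hloc (i + 1) b hvb hxb with h | h
            · rw [show i + 1 - 1 = i from by ring] at h
              exact hbne h
            · rw [hw] at h
              rcases Sym2.eq_iff.mp h with ⟨_, h2⟩ | ⟨h1, _⟩
              · rw [h2] at hpw
                rw [show i + 1 + 1 = i + 2 from by ring] at hpw
                exact hB hpw
              · exact hneighbor (i + 1) h1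
        · rfl
    have := hphi (c i) (c (i + 1)) (hadj i)
    rw [hlt] at this
    norm_num at this
  set P : ZMod m → Prop := fun j => pref (c j) (c (j - 1)) (c (j + 1)) with hP
  have hstep : ∀ j, ¬ P j → ¬ P (j + 1) := by
    intro j hPj hP1
    have hQ := (hPQ j).resolve_left hPj
    simp only [hP] at hP1
    rw [show j + 1 - 1 = j from by ring, show j + 1 + 1 = j + 2 from by ring] at hP1
    exact hasym _ _ _ hQ hP1
  by_cases hall : ∀ i, P i
  · exact Or.inr hall
  · push_neg at hall
    obtain ⟨j, hj⟩ := hall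
    have hk : ∀ k : ℕ, ¬ P (j + (k : ZMod m)) := by
      intro k
      induction k with
      | zero => simpa using hj
      | succ n ih =>
        have h' : (j + ((n + 1 : ℕ) : ZMod m)) = (j + (n : ℕ)) + 1 := by push_cast; ring
        rw [h']
        exact hstep _ ih
    have hnone : ∀ i, ¬ P i := by
      intro i
      have hi : i = j + (((i - j).val : ℕ) : ZMod m) := by
        rw [ZMod.natCast_val, ZMod.cast_id]; ring
      rw [hi]
      exact hk _
    left
    intro i
    have hadjprev : G.Adj (c i) (c (i - 1)) := by
      have := hadj (i - 1)
      rw [show i - 1 + 1 = i from by ring] at this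
      exact this.symm
    rcases hpref.total (c i) (c (i + 1)) (c (i - 1)) (hadj i) hadjprev
        (fun h => hskip i h.symm) with h | h
    · exact h
    · exact absurd h (hnone i)
end

section
/- Let (G, ≺) be a stable matching instance with G bipartite, and let M, M' be two stable matchings. Then for every vertex v matched in both, either M(v) = M'(v), or the set of vertices where M and M' differ decomposes so that along each M∪M'-alternating cycle, one side's vertices all prefer M and the other side's all prefer M'. In particular: if uv ∈ M \ M' and u prefers M'(u) over v, then v prefers u over M'(v). -/
open SimpleGraph

variable {V : Type*} [Fintype V] [DecidableEq V]

section AltPrefAux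

lemma match_unique' {N : Set (Sym2 V)} (h : IsMatch N) {a x x' : V}
    (hx : s(a, x) ∈ N) (hx' : s(a, x') ∈ N) : x = x' := by
  have he := h _ hx _ hx' a (by simp) (by simp)
  rcases Sym2.eq_iff.mp he with ⟨_, h2⟩ | ⟨h1, h2⟩
  · exact h2
  · rw [h2, h1]

/-- Invariant along the alternating walk. -/
def QQ (pref : V → V → V → Prop) (mtch : Bool → Set (Sym2 V)) (c : Bool) (a b : V) : Prop :=
  s(a, b) ∈ mtch c ∧ s(a, b) ∉ mtch (!c) ∧ ∀ z, s(a, z) ∈ mtch (!c) → pref a b z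

lemma step_lemma_s13 (G : SimpleGraph V) (pref : V → V → V → Prop)
    (hpref : StrictPrefs G pref) (mtch : Bool → Set (Sym2 V))
    (hst : ∀ c, IsStable G pref (mtch c)) :
    ∀ c a b, QQ pref mtch c a b → ∃ d, QQ pref mtch (!c) b d := by
  intro c a b ⟨hab, habn, hdom⟩
  have hadj : G.Adj a b := (hst c).2.1 hab
  have hex : ∃ d, s(b, d) ∈ mtch (!c) ∧ pref b d a := by
    by_contra hcon
    push_neg at hcon
    have hblock : Blocks G pref (mtch (!c)) a b := by
      refine ⟨hadj, habn, fun z hz => hdom z hz, ?_⟩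
      intro z hz
      have hne : a ≠ z := by
        rintro rfl
        exact habn (Sym2.eq_swap ▸ hz)
      have hz' : G.Adj b z := (hst (!c)).2.1 hz
      rcases hpref.total b a z hadj.symm hz' hne with h | h
      · exact h
      · exact absurd h (hcon z hz)
    exact (hst (!c)).2.2 a b hblock
  obtain ⟨d, hbd, hpd⟩ := hex
  have hdne : d ≠ a := by
    rintro rfl
    exact hpref.irrefl b d hpd
  refine ⟨d, hbd, ?_, ?_⟩
  · rw [Bool.not_not]
    intro hmem
    exact hdne (match_unique' (hst c).1 hmem (Sym2.eq_swap ▸ hab))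
  · intro z hz
    rw [Bool.not_not] at hz
    have hza : z = a := match_unique' (hst c).1 hz (Sym2.eq_swap ▸ hab)
    rw [hza]
    exact hpd

/-- Recursive construction of the alternating walk. -/
noncomputable def chainW {α : Type*} (P : Bool → α → α → Prop)
    (hstep : ∀ c a b, P c a b → ∃ d, P (!c) b d)
    (init : {p : Bool × α × α // P p.1 p.2.1 p.2.2}) :
    ℕ → {p : Bool × α × α // P p.1 p.2.1 p.2.2}
  | 0 => init
  | n + 1 =>
    let q := chainW P hstep init n
    ⟨(!q.1.1, q.1.2.2, Classical.choose (hstep _ _ _ q.2)),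
      Classical.choose_spec (hstep _ _ _ q.2)⟩

/-- Boolean parity. -/
def bpar (n : ℕ) : Bool := decide (n % 2 = 0)

lemma bpar_succ (n : ℕ) : bpar (n + 1) = !bpar n := by
  rcases Nat.mod_two_eq_zero_or_one n with h | h <;>
    simp [bpar, Nat.add_mod, h]

lemma walk_exists (G : SimpleGraph V) (pref : V → V → V → Prop)
    (hpref : StrictPrefs G pref) (mtch : Bool → Set (Sym2 V))
    (hst : ∀ c, IsStable G pref (mtch c)) (u w : V)
    (h0 : QQ pref mtch true u w) :
    ∃ y : ℕ → V, y 0 = u ∧ y 1 = w ∧ ∀ n, QQ pref mtch (bpar n) (y n) (y (n + 1)) := by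
  have hstep := step_lemma_s13 G pref hpref mtch hst
  let g := chainW (QQ pref mtch) hstep ⟨(true, u, w), h0⟩
  have hflip : ∀ n, (g (n + 1)).1.1 = !(g n).1.1 := fun n => rfl
  have hshift : ∀ n, (g (n + 1)).1.2.1 = (g n).1.2.2 := fun n => rfl
  have hb : ∀ n, (g n).1.1 = bpar n := by
    intro n
    induction n with
    | zero => rfl
    | succ k ih => rw [hflip, ih, bpar_succ]
  refine ⟨fun n => (g n).1.2.1, rfl, rfl, ?_⟩
  intro n
  have hq := (g n).2
  rw [hb n] at hq
  rw [← hshift n] at hq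
  exact hq

end AltPrefAux

/-- for stable matchings `M, M'` of a bipartite instance and an edge
`uv ∈ M \ M'`, if `u` prefers its `M'`-partner over `v`, then `v` prefers `u` over its
`M'`-partner (where being matched is preferred over being unmatched). -/
theorem alternating_preference (G : SimpleGraph V) (pref : V → V → V → Prop)
    (hpref : StrictPrefs G pref) (hbip : G.Colorable 2)
    (M M' : Set (Sym2 V)) (hM : IsStable G pref M) (hM' : IsStable G pref M')
    (u v : V) (huvM : s(u, v) ∈ M) (huvM' : s(u, v) ∉ M')
    (hu : ∃ w, s(u, w) ∈ M' ∧ pref u w v) :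
    ∀ w, s(v, w) ∈ M' → pref v u w := by
  classical
  intro w' hw'
  obtain ⟨w, hwM', hpw⟩ := hu
  set mtch : Bool → Set (Sym2 V) := fun c => cond c M' M with hmtch
  have hst : ∀ c, IsStable G pref (mtch c) := by
    intro c; cases c
    · exact hM
    · exact hM'
  have huniq : ∀ (c : Bool) (x z z' : V), s(x, z) ∈ mtch c → s(x, z') ∈ mtch c → z = z' :=
    fun c _ _ _ hz hz' => match_unique' (hst c).1 hz hz'
  have h0 : QQ pref mtch true u w := by
    refine ⟨hwM', ?_, ?_⟩
    · intro hmem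
      have : v = w := huniq false u v w huvM hmem
      exact hpref.irrefl u w (this ▸ hpw)
    · intro z hz
      have : v = z := huniq false u v z huvM hz
      exact this ▸ hpw
  obtain ⟨y, hy0, hy1, hQ⟩ := walk_exists G pref hpref mtch hst u w h0
  have hE : ∀ n, s(y n, y (n + 1)) ∈ mtch (bpar n) := fun n => (hQ n).1
  have hne : ∀ n, y n ≠ y (n + 1) := fun n =>
    ((hst (bpar n)).2.1 (hE n)).ne
  -- key lemma: the first repeated vertex yields the conclusion
  have key : ∀ j : ℕ, (∃ i, i < j ∧ y i = y j) →
      (∀ k, k < j → ¬ ∃ i, i < k ∧ y i = y k) → pref v u w' := by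
    intro j hspec hmin
    obtain ⟨i, hij, hyij⟩ := hspec
    rcases Nat.eq_zero_or_pos i with rfl | hipos
    · -- y j = u
      obtain ⟨j', rfl⟩ : ∃ j', j = j' + 1 := ⟨j - 1, by omega⟩
      rcases Nat.eq_zero_or_pos j' with rfl | hj'pos
      · exact absurd (hy0 ▸ hyij) (hne 0)
      obtain ⟨j'', rfl⟩ : ∃ j'', j' = j'' + 1 := ⟨j' - 1, by omega⟩
      have hju : y (j'' + 1 + 1) = u := hy0 ▸ hyij.symm
      by_cases hev : j'' % 2 = 0
      · -- edge (y (j''+1), u) lies in M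
        have hb1 : bpar (j'' + 1) = false := by simp [bpar]; omega
        have he1 : s(y (j'' + 1), u) ∈ M := by
          have := hE (j'' + 1)
          rw [hb1, hju] at this
          exact this
        have hyv : y (j'' + 1) = v :=
          huniq false u (y (j'' + 1)) v (Sym2.eq_swap ▸ he1) huvM
        have hb0 : bpar j'' = true := by simp [bpar, hev]
        have he0 : s(y j'', v) ∈ M' := by
          have := hE j''
          rw [hb0, hyv] at this
          exact this
        have hyw : y j'' = w' := huniq true v (y j'') w' (Sym2.eq_swap ▸ he0) hw'
        have hq := (hQ (j'' + 1)).2.2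
        rw [hb1] at hq
        have := hq (y j'') (by rw [hyw, hyv]; exact hw')
        rw [hyv, hju, hyw] at this
        exact this
      · -- edge (y (j''+1), u) lies in M'; contradiction with minimality
        have hb1 : bpar (j'' + 1) = true := by
          simp [bpar]; omega
        have he1 : s(y (j'' + 1), u) ∈ M' := by
          have := hE (j'' + 1)
          rw [hb1, hju] at this
          exact this
        have he0 : s(u, y 1) ∈ M' := by
          have := hE 0
          rw [hy0] at this
          exact this
        have hyw : y (j'' + 1) = y 1 :=
          huniq true u (y (j'' + 1)) (y 1) (Sym2.eq_swap ▸ he1) he0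
        have hj2 : 1 < j'' + 1 := by omega
        exact absurd ⟨1, hj2, hyw.symm⟩ (hmin (j'' + 1) (by omega))
    · -- i ≥ 1 : contradiction with minimality
      exfalso
      obtain ⟨i', rfl⟩ : ∃ i', i = i' + 1 := ⟨i - 1, by omega⟩
      obtain ⟨j', rfl⟩ : ∃ j', j = j' + 1 := ⟨j - 1, by omega⟩
      have hij' : i' < j' := by omega
      by_cases hpar : i' % 2 = j' % 2
      · -- incoming edges in the same matching
        have hbeq : bpar j' = bpar i' := by
          simp only [bpar]
          rw [hpar]
        have hei : s(y (i' + 1), y i') ∈ mtch (bpar i') := Sym2.eq_swap ▸ hE i'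
        have hej : s(y (i' + 1), y j') ∈ mtch (bpar i') := by
          have := Sym2.eq_swap ▸ hE j'
          rw [hbeq, ← hyij] at this
          exact this
        have : y i' = y j' := huniq _ _ _ _ hei hej
        exact hmin j' (by omega) ⟨i', by omega, this⟩
      · -- incoming edge at y j in same matching as outgoing edge at y i
        have hbeq : bpar j' = bpar (i' + 1) := by
          simp only [bpar, bpar_succ]
          have : j' % 2 = (i' + 1) % 2 := by omega
          rw [this]
        have hei : s(y (i' + 1), y (i' + 1 + 1)) ∈ mtch (bpar (i' + 1)) := hE (i' + 1)
        have hej : s(y (i' + 1), y j') ∈ mtch (bpar (i' + 1)) := by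
          have := Sym2.eq_swap ▸ hE j'
          rw [hbeq, ← hyij] at this
          exact this
        have heq2 : y (i' + 1 + 1) = y j' := huniq _ _ _ _ hei hej
        rcases (by omega : j' = i' + 1 ∨ j' = i' + 2 ∨ i' + 2 < j') with h | h | h
        · rw [h] at hyij
          exact hne (i' + 1) hyij
        · omega
        · exact hmin j' (by omega) ⟨i' + 2, h, heq2⟩
  -- the walk must repeat
  obtain ⟨a, b, hab, heq⟩ := Finite.exists_ne_map_eq_of_infinite y
  have hP : ∃ j, ∃ i, i < j ∧ y i = y j := by
    rcases lt_or_gt_of_ne hab with h | h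
    · exact ⟨b, a, h, heq⟩
    · exact ⟨a, b, h, heq.symm⟩
  exact key (Nat.find hP) (Nat.find_spec hP) (fun k hk => Nat.find_min hP hk)
end

section
/- Let (G, ≺) be an instance with a set 𝒞 of vertex-disjoint even cycles with cyclic preferences and single edges covering all vertices, such that x_𝒞 ∈ FSM(G,≺). Let M¹ be a perfect stable matching with supp(χ^{M¹}) ⊆ supp(x_𝒞), let W be the cycle vertices, W₁ = {v ∈ W : vv₊ ∈ M¹} and W₂ = W \ W₁. Then no intermediate edge uv (an edge of E with both endpoints on cycles fitting strictly between the cycle edges in both endpoints' preference lists) has both endpoints in W₂. -/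
open SimpleGraph

variable {V : Type*} [Fintype V] [DecidableEq V]

/-- if `M¹` is a perfect stable matching with support inside
`supp(x_𝒞)`, then no intermediate edge `uv` has both endpoints in
`W₂ = {v : v v₊ ∉ M¹}`. -/
theorem no_intermediate_edge_in_W2 (G : SimpleGraph V)
    (pref : V → V → V → Prop) (hpref : StrictPrefs G pref)
    (x : Sym2 V → ℝ) (hx : InFSM G pref x)
    (M : Set (Sym2 V)) (hM : IsStable G pref M) (hMperf : ∀ z, Covers M z)
    (hsupp : ∀ e ∈ M, x e ≠ 0)
    (u v uP uM vP vM : V) (huv : G.Adj u v)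
    -- u lies on a cycle of 𝒞 with neighbors u₊ ≻_u u₋
    (huP : x s(u, uP) = 1 / 2) (huM : x s(u, uM) = 1 / 2) (huPM : uP ≠ uM)
    (hudeg : ∀ g, u ∈ g → x g ≠ 0 → g = s(u, uP) ∨ g = s(u, uM))
    (hupref : pref u uP uM)
    -- v lies on a cycle of 𝒞 with neighbors v₊ ≻_v v₋
    (hvP : x s(v, vP) = 1 / 2) (hvM : x s(v, vM) = 1 / 2) (hvPM : vP ≠ vM)
    (hvdeg : ∀ g, v ∈ g → x g ≠ 0 → g = s(v, vP) ∨ g = s(v, vM))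
    (hvpref : pref v vP vM)
    -- uv is an intermediate edge
    (hiu1 : pref u uP v) (hiu2 : pref u v uM)
    (hiv1 : pref v vP u) (hiv2 : pref v u vM)
    -- both endpoints in W₂
    (huW2 : s(u, uP) ∉ M) (hvW2 : s(v, vP) ∉ M) :
    False := by
  have huuM : u ≠ uM := (hpref.adj_right u v uM hiu2).ne
  have hvvM : v ≠ vM := (hpref.adj_right v u vM hiv2).ne
  -- u is matched to uM
  obtain ⟨e, heM, hue⟩ := hMperf u
  have heE : e = s(u, uM) := by
    rcases hudeg e hue (hsupp e heM) with h | h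
    · exact absurd (h ▸ heM) huW2
    · exact h
  subst heE
  -- v is matched to vM
  obtain ⟨f, hfM, hvf⟩ := hMperf v
  have hfE : f = s(v, vM) := by
    rcases hvdeg f hvf (hsupp f hfM) with h | h
    · exact absurd (h ▸ hfM) hvW2
    · exact h
  subst hfE
  -- s(u,v) ∉ M
  have hnuv : s(u, v) ∉ M := by
    intro hmem
    rcases hudeg _ (Sym2.mem_mk_left u v) (hsupp _ hmem) with h | h
    · rcases Sym2.eq_iff.mp h with ⟨_, rfl⟩ | ⟨rfl, rfl⟩
      · exact hpref.irrefl u v hiu1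
      · exact huv.ne rfl
    · rcases Sym2.eq_iff.mp h with ⟨_, rfl⟩ | ⟨rfl, rfl⟩
      · exact hpref.irrefl u v hiu2
      · exact huv.ne rfl
  -- uv blocks M
  refine hM.2.2 u v ⟨huv, hnuv, ?_, ?_⟩
  · intro w hw
    have := hM.1 _ hw _ heM u (Sym2.mem_mk_left u w) (Sym2.mem_mk_left u uM)
    rcases Sym2.eq_iff.mp this with ⟨_, rfl⟩ | ⟨h1, _⟩
    · exact hiu2
    · exact absurd h1 huuM
  · intro w hw
    have := hM.1 _ hw _ hfM v (Sym2.mem_mk_left v w) (Sym2.mem_mk_left v vM)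
    rcases Sym2.eq_iff.mp this with ⟨_, rfl⟩ | ⟨h1, _⟩
    · exact hiv2
    · exact absurd h1 hvvM
end

section
/- Let (G, ≺) be a bipartite stable matching instance. Then the fractional stable matching polytope FSM(G,≺) = {x ∈ ℝ^E : x ≥ 0, x(δ(v)) ≤ 1 ∀v ∈ V, x(φ(e)) ≥ 1 ∀e ∈ E} has all vertices integral, and the integral points of FSM(G,≺) are exactly the incidence vectors of stable matchings of (G, ≺). -/
/-!
Integral points of `FSM(G, ≺)` are stable matchings: the degree constraints make `{x = 1}` a
matching, and `x(φ(uv)) ≥ 1` says that `uv` does not block it.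

For the vertices, let `x ∈ FSM(G, ≺)` have a fractional coordinate. At a vertex with a
fractional edge every positive edge is fractional. If `w` is the favourite fractional partner
of `m`, then `x(φ(mw)) ≥ 1` forces `x(δ(w)) = 1` and makes `m` the least favourite fractional
partner of `w`; since `m ↦ w` is injective, every vertex with a fractional edge is reached.
Sign the two colour classes by `σ = ±1` and move `x` by `σ(u)` on the edge from each `u` to
its favourite fractional partner and by `-σ(u)` on the edge to its least favourite one. This
keeps every `x(δ(v))` and touches only fractional edges. On a tight constraint `x(φ(uv)) = 1`
the change at `u` is `σ(u)` exactly when the weight `t` of the part of `φ(uv)` at `u` lies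
strictly between 0 and 1, while the part at `v` has weight `1 - t`; the changes cancel. So
`x ± ε d` stays in `FSM(G, ≺)` for small `ε`, and `x` is not extreme.
-/

open SimpleGraph

variable {V : Type*} [Fintype V] [DecidableEq V]

open Finset Topology

theorem notMem_extremePoints_of_eventually_add_smul_mem {E : Type*} [AddCommGroup E]
    [Module ℝ E] {A : Set E} {x d : E} (hd : d ≠ 0) (h : ∀ᶠ t in 𝓝 (0 : ℝ), x + t • d ∈ A) :
    x ∉ A.extremePoints ℝ := by
  obtain ⟨ε, hε, hball⟩ := Metric.eventually_nhds_iff.1 h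
  have hmem (t : ℝ) (ht : |t| = ε / 2) : x + t • d ∈ A :=
    hball (by rw [Real.dist_eq, sub_zero, ht]; linarith)
  intro hx
  have hseg : x ∈ openSegment ℝ (x + (ε / 2) • d) (x + (-(ε / 2)) • d) :=
    ⟨1 / 2, 1 / 2, by norm_num, by norm_num, by norm_num, by module⟩
  have hsame := hx.2 (hmem _ (abs_of_pos (by linarith))) (hmem _ (by rw [abs_neg,
    abs_of_pos (by linarith)])) hseg
  rw [add_eq_left, smul_eq_zero] at hsame
  exact hsame.elim (fun h => by linarith) hd

omit [Fintype V] [DecidableEq V] in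
theorem exists_sign_of_colorable_two {G : SimpleGraph V} (hG : G.Colorable 2) :
    ∃ σ : V → ℝ, (∀ v, σ v ≠ 0) ∧ ∀ u v, G.Adj u v → σ u + σ v = 0 := by
  obtain ⟨C⟩ := hG
  refine ⟨fun v => if C v = 0 then 1 else -1, fun v => by dsimp only; split_ifs <;> norm_num,
    fun u v huv => ?_⟩
  have hne := C.valid huv
  dsimp only
  split_ifs <;> grind

section
open scoped Classical

variable {G : SimpleGraph V} {pref : V → V → V → Prop} {x : Sym2 V → ℝ} {σ : V → ℝ}

noncomputable def better (pref : V → V → V → Prop) (u v : V) : Finset V :=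
  univ.filter (pref u · v)

theorem degSum_eq_sum_neighborFinset (G : SimpleGraph V) (y : Sym2 V → ℝ) (v : V) :
    degSum G y v = ∑ w ∈ G.neighborFinset v, y s(v, w) := by
  have h : G.edgeFinset.filter (v ∈ ·) = (G.neighborFinset v).map (Sym2.mkEmbedding v) := by
    ext e
    induction e using Sym2.ind with
    | _ a b =>
      simp only [mem_filter, mem_edgeFinset, mem_edgeSet, Sym2.mem_iff, Finset.mem_map,
        mem_neighborFinset, Sym2.mkEmbedding_apply]
      constructor
      · rintro ⟨hab, rfl | rfl⟩
        exacts [⟨b, hab, rfl⟩, ⟨a, hab.symm, Sym2.eq_swap⟩]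
      · rintro ⟨w, hw, h⟩
        obtain ⟨rfl, rfl⟩ | ⟨rfl, rfl⟩ := Sym2.eq_iff.1 h
        exacts [⟨hw, Or.inl rfl⟩, ⟨hw.symm, Or.inr rfl⟩]
  rw [degSum, ← sum_filter, h, sum_map]
  rfl

theorem phiSum_eq (hp : StrictPrefs G pref) {u v : V} (h : G.Adj u v) (y : Sym2 V → ℝ) :
    phiSum G pref y u v =
      ∑ w ∈ insert v (better pref u v), y s(u, w) + ∑ w ∈ better pref v u, y s(v, w) := by
  have hdisj : Disjoint ((insert v (better pref u v)).map (Sym2.mkEmbedding u))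
      ((better pref v u).map (Sym2.mkEmbedding v)) := by
    simp only [Finset.disjoint_left, Finset.mem_map, Sym2.mkEmbedding_apply]
    rintro _ ⟨w, -, rfl⟩ ⟨w', hw', h'⟩
    rcases Sym2.eq_iff.1 h' with ⟨hvu, -⟩ | ⟨-, rfl⟩
    · exact G.ne_of_adj h hvu.symm
    · exact hp.irrefl _ _ (mem_filter.1 hw').2
  have hfilter : G.edgeFinset.filter (· ∈ Phi G pref u v) =
      (insert v (better pref u v)).map (Sym2.mkEmbedding u) ∪
        (better pref v u).map (Sym2.mkEmbedding v) := by
    ext e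
    rw [mem_filter, mem_union, Finset.mem_map, Finset.mem_map]
    simp only [Sym2.mkEmbedding_apply, mem_insert, better, mem_filter, mem_univ, true_and, Phi,
      Set.mem_ofPred_eq, mem_edgeFinset]
    constructor
    · rintro ⟨-, -, rfl | ⟨w, rfl, hw⟩ | ⟨w, rfl, hw⟩⟩
      exacts [Or.inl ⟨v, Or.inl rfl, rfl⟩, Or.inl ⟨w, Or.inr hw, rfl⟩, Or.inr ⟨w, hw, rfl⟩]
    · rintro (⟨w, rfl | hw, rfl⟩ | ⟨w, hw, rfl⟩)
      · exact ⟨h, h, Or.inl rfl⟩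
      · exact ⟨hp.adj_left _ _ _ hw, hp.adj_left _ _ _ hw, Or.inr (Or.inl ⟨w, rfl, hw⟩)⟩
      · exact ⟨hp.adj_left _ _ _ hw, hp.adj_left _ _ _ hw, Or.inr (Or.inr ⟨w, rfl, hw⟩)⟩
  rw [phiSum, ← sum_filter, hfilter, sum_union hdisj, sum_map, sum_map]
  rfl

theorem degSum_add_smul (G : SimpleGraph V) (x y : Sym2 V → ℝ) (t : ℝ) (v : V) :
    degSum G (x + t • y) v = degSum G x v + t * degSum G y v := by
  simp only [degSum_eq_sum_neighborFinset, Pi.add_apply, Pi.smul_apply, smul_eq_mul,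
    sum_add_distrib, mul_sum]

omit [DecidableEq V] in
theorem phiSum_add_smul (G : SimpleGraph V) (pref : V → V → V → Prop) (x y : Sym2 V → ℝ)
    (t : ℝ) (u v : V) :
    phiSum G pref (x + t • y) u v = phiSum G pref x u v + t * phiSum G pref y u v := by
  simp only [phiSum, ← sum_filter, Pi.add_apply, Pi.smul_apply, smul_eq_mul,
    sum_add_distrib, mul_sum]

theorem InFSM.nonneg (hx : InFSM G pref x) (e : Sym2 V) : 0 ≤ x e := hx.1 e

theorem InFSM.eq_zero_of_notMem (hx : InFSM G pref x) : ∀ e, e ∉ G.edgeSet → x e = 0 :=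
  hx.2.1

theorem InFSM.degSum_le_one (hx : InFSM G pref x) (v : V) : degSum G x v ≤ 1 := hx.2.2.1 v

theorem InFSM.one_le_phiSum (hx : InFSM G pref x) {u v : V} (h : G.Adj u v) :
    1 ≤ phiSum G pref x u v :=
  hx.2.2.2 u v h

theorem InFSM.adj_of_ne_zero (hx : InFSM G pref x) {u v : V} (h : x s(u, v) ≠ 0) :
    G.Adj u v := by
  by_contra huv
  exact h (hx.eq_zero_of_notMem _ huv)

theorem InFSM.sum_le_degSum (hx : InFSM G pref x) (v : V) (s : Finset V) :
    ∑ w ∈ s, x s(v, w) ≤ degSum G x v := by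
  rw [degSum_eq_sum_neighborFinset, ← sum_filter_of_ne fun w _ => hx.adj_of_ne_zero]
  exact sum_le_sum_of_subset_of_nonneg (fun w hw => by simpa using (mem_filter.1 hw).2)
    fun _ _ _ => hx.nonneg _

theorem InFSM.degSum_eq_sum_of_support (hx : InFSM G pref x) {v : V} {s : Finset V}
    (hs : ∀ w, x s(v, w) ≠ 0 → w ∈ s) : degSum G x v = ∑ w ∈ s, x s(v, w) := by
  have hsupp {t : Finset V} (ht : ∀ w, x s(v, w) ≠ 0 → w ∈ t) :
      ∑ w ∈ t, x s(v, w) = ∑ w, x s(v, w) :=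
    sum_subset (subset_univ t) fun w _ hw => not_not.1 (mt (ht w) hw)
  rw [degSum_eq_sum_neighborFinset, hsupp, hsupp hs]
  exact fun w hw => (mem_neighborFinset G v w).2 (hx.adj_of_ne_zero hw)

theorem InFSM.eq_zero_of_one_le_sum (hx : InFSM G pref x) {v w : V} {s : Finset V}
    (hs : 1 ≤ ∑ a ∈ s, x s(v, a)) (hw : w ∉ s) : x s(v, w) = 0 := by
  have := hx.sum_le_degSum v (insert w s)
  rw [sum_insert hw] at this
  linarith [hx.degSum_le_one v, hx.nonneg s(v, w)]

theorem InFSM.eventually_add_smul (hx : InFSM G pref x) {d : Sym2 V → ℝ}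
    (hpos : ∀ e, d e ≠ 0 → 0 < x e) (hdeg : ∀ v, degSum G d v = 0)
    (hphi : ∀ u v, G.Adj u v → phiSum G pref x u v = 1 → phiSum G pref d u v = 0) :
    ∀ᶠ t in 𝓝 (0 : ℝ), InFSM G pref (x + t • d) := by
  have hnear {a b : ℝ} (c : ℝ) (hab : a < b) : ∀ᶠ t in 𝓝 (0 : ℝ), a ≤ b + t * c :=
    (((continuous_const.add (continuous_id.mul continuous_const)).tendsto 0).eventually_const_lt
      (by simpa using hab)).mono fun _ => le_of_lt
  have hd0 (e : Sym2 V) (he : e ∉ G.edgeSet) : d e = 0 := by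
    by_contra hde
    exact (hpos e hde).ne' (hx.eq_zero_of_notMem e he)
  have hnonneg : ∀ᶠ t in 𝓝 (0 : ℝ), ∀ e, 0 ≤ x e + t * d e := by
    refine Filter.eventually_all.2 fun e => ?_
    by_cases hde : d e = 0
    · exact Filter.Eventually.of_forall fun t => by simpa [hde] using hx.nonneg e
    · exact hnear _ (hpos e hde)
  have hphi' : ∀ᶠ t in 𝓝 (0 : ℝ), ∀ u v, G.Adj u v →
      1 ≤ phiSum G pref x u v + t * phiSum G pref d u v := by
    refine Filter.eventually_all.2 fun u => Filter.eventually_all.2 fun v => ?_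
    by_cases huv : G.Adj u v
    · by_cases ht : phiSum G pref x u v = 1
      · exact Filter.Eventually.of_forall fun t _ => by
          rw [ht, hphi u v huv ht, mul_zero, add_zero]
      · exact (hnear _ ((hx.one_le_phiSum huv).lt_of_ne (Ne.symm ht))).mono fun t h _ => h
    · exact Filter.Eventually.of_forall fun t h => absurd h huv
  filter_upwards [hnonneg, hphi'] with t hnonneg hphi'
  refine ⟨hnonneg, fun e he => ?_, fun v => ?_, fun u v huv => ?_⟩
  · simp [hx.eq_zero_of_notMem e he, hd0 e he]
  · rw [degSum_add_smul, hdeg, mul_zero, add_zero]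
    exact hx.degSum_le_one v
  · rw [phiSum_add_smul]
    exact hphi' u v huv


omit [DecidableEq V] in
theorem IsStable.exists_mem_Phi (hp : StrictPrefs G pref) {M : Set (Sym2 V)}
    (hM : IsStable G pref M) {u v : V} (h : G.Adj u v) : ∃ e ∈ M, e ∈ Phi G pref u v := by
  by_contra hnone
  have hPhi {e : Sym2 V} (he : e ∈ M) (hφ : e ∈ Phi G pref u v) : False := hnone ⟨e, he, hφ⟩
  refine hM.2.2 u v ⟨h, fun huv => hPhi huv ⟨h, Or.inl rfl⟩, fun w hw => ?_, fun w hw => ?_⟩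
  · have hwv : w ≠ v := by rintro rfl; exact hPhi hw ⟨h, Or.inl rfl⟩
    refine (hp.total u v w h (hM.2.1 hw) hwv.symm).resolve_right fun hwv' => ?_
    exact hPhi hw ⟨hM.2.1 hw, Or.inr (Or.inl ⟨w, rfl, hwv'⟩)⟩
  · have hwu : w ≠ u := by rintro rfl; exact hPhi (Sym2.eq_swap ▸ hw) ⟨h, Or.inl rfl⟩
    refine (hp.total v u w h.symm (hM.2.1 hw) hwu.symm).resolve_right fun hwu' => ?_
    exact hPhi hw ⟨hM.2.1 hw, Or.inr (Or.inr ⟨w, rfl, hwu'⟩)⟩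

theorem IsStable.inFSM (hp : StrictPrefs G pref) {M : Set (Sym2 V)} (hM : IsStable G pref M) :
    InFSM G pref fun e => if e ∈ M then 1 else 0 := by
  refine ⟨fun e => by dsimp only; split_ifs <;> norm_num,
    fun e he => if_neg fun heM => he (hM.2.1 heM), fun v => ?_, fun u v h => ?_⟩
  · rw [degSum_eq_sum_neighborFinset, sum_boole, Nat.cast_le_one, card_le_one]
    intro a ha b hb
    exact Sym2.congr_right.1 (hM.1 _ (mem_filter.1 ha).2 _ (mem_filter.1 hb).2 v
      (Sym2.mem_mk_left v a) (Sym2.mem_mk_left v b))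
  · obtain ⟨e, heM, hφ⟩ := hM.exists_mem_Phi hp h
    have he : e ∈ G.edgeFinset := mem_edgeFinset.2 (hM.2.1 heM)
    calc (1 : ℝ) = if e ∈ Phi G pref u v then if e ∈ M then 1 else 0 else 0 := by
          rw [if_pos hφ, if_pos heM]
      _ ≤ phiSum G pref (fun e => if e ∈ M then 1 else 0) u v :=
          single_le_sum (f := fun e => if e ∈ Phi G pref u v then
            (if e ∈ M then (1 : ℝ) else 0) else 0) (fun _ _ => by split_ifs <;> norm_num) he

theorem InFSM.isStable (hp : StrictPrefs G pref) (hx : InFSM G pref x)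
    (h01 : ∀ e, x e = 0 ∨ x e = 1) : IsStable G pref {e | x e = 1} := by
  have hne {e : Sym2 V} (he : x e = 1) : x e ≠ 0 := by rw [he]; exact one_ne_zero
  refine ⟨fun e he f hf v hve hvf => ?_, fun e he => ?_, fun u v ⟨huv, hnot, hu, hv⟩ => ?_⟩
  · obtain ⟨a, rfl⟩ := Sym2.mem_iff_exists.1 hve
    obtain ⟨b, rfl⟩ := Sym2.mem_iff_exists.1 hvf
    by_contra hab
    have := hx.sum_le_degSum v {a, b}
    rw [sum_pair fun h => hab (by rw [h]), show x s(v, a) = 1 from he,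
      show x s(v, b) = 1 from hf] at this
    linarith [hx.degSum_le_one v]
  · by_contra hE
    exact hne he (hx.eq_zero_of_notMem _ hE)
  · obtain ⟨e, -, he⟩ := exists_ne_zero_of_sum_ne_zero
      (ne_of_gt (zero_lt_one.trans_le (hx.one_le_phiSum huv)))
    have hφ : e ∈ Phi G pref u v := by by_contra hφ; exact he (if_neg hφ)
    have hx1 : x e = 1 := (h01 e).resolve_left fun h0 => he (by simp [h0])
    obtain ⟨-, rfl | ⟨w, rfl, hw⟩ | ⟨w, rfl, hw⟩⟩ := hφ
    · exact hnot hx1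
    · exact hp.irrefl u w (hp.trans u w v w hw (hu w hx1))
    · exact hp.irrefl v w (hp.trans v w u w hw (hv w hx1))

theorem inFSM_iff_exists_isStable (hp : StrictPrefs G pref) (h01 : ∀ e, x e = 0 ∨ x e = 1) :
    InFSM G pref x ↔ ∃ M, IsStable G pref M ∧ ∀ e, x e = if e ∈ M then 1 else 0 := by
  constructor
  · intro hx
    refine ⟨_, hx.isStable hp h01, fun e => ?_⟩
    split_ifs with he
    exacts [he, (h01 e).resolve_right he]
  · rintro ⟨M, hM, hxM⟩
    rw [show x = _ from funext hxM]
    exact hM.inFSM hp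

def IsFrac (x : Sym2 V → ℝ) (u v : V) : Prop := x s(u, v) ≠ 0 ∧ x s(u, v) ≠ 1

def IsBestFrac (pref : V → V → V → Prop) (x : Sym2 V → ℝ) (u v : V) : Prop :=
  IsFrac x u v ∧ ∀ w, IsFrac x u w → w ≠ v → pref u v w

def IsWorstFrac (pref : V → V → V → Prop) (x : Sym2 V → ℝ) (u v : V) : Prop :=
  IsBestFrac (fun v a b => pref v b a) x u v

/-- Defaults to `u` itself when `u` has no fractional edge, so that `bestFrac` and `worstFrac`
then agree. -/
noncomputable def bestFrac (pref : V → V → V → Prop) (x : Sym2 V → ℝ) (u : V) : V :=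
  if h : ∃ v, IsBestFrac pref x u v then h.choose else u

noncomputable def worstFrac (pref : V → V → V → Prop) (x : Sym2 V → ℝ) (u : V) : V :=
  bestFrac (fun v a b => pref v b a) x u

omit [Fintype V] [DecidableEq V] in
theorem StrictPrefs.rev (hp : StrictPrefs G pref) :
    StrictPrefs G fun v a b => pref v b a where
  adj_left v a b h := hp.adj_right v b a h
  adj_right v a b h := hp.adj_left v b a h
  irrefl := hp.irrefl
  trans v a b c hab hbc := hp.trans v c b a hbc hab
  total v a b ha hb hab := (hp.total v a b ha hb hab).symm

omit [Fintype V] [DecidableEq V] in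
theorem IsFrac.symm {u v : V} (h : IsFrac x u v) : IsFrac x v u := by
  rwa [IsFrac, Sym2.eq_swap]

omit [Fintype V] [DecidableEq V] in
theorem IsFrac.adj (hz : ∀ e, e ∉ G.edgeSet → x e = 0) {u v : V} (h : IsFrac x u v) :
    G.Adj u v := by
  by_contra huv
  exact h.1 (hz _ huv)

omit [DecidableEq V] in
theorem exists_isBestFrac (hp : StrictPrefs G pref) (hz : ∀ e, e ∉ G.edgeSet → x e = 0)
    {u : V} (hu : ∃ v, IsFrac x u v) : ∃ v, IsBestFrac pref x u v := by
  have : IsTrans V (pref u) := ⟨hp.trans u⟩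
  have : Std.Irrefl (pref u) := ⟨hp.irrefl u⟩
  obtain ⟨v, hv, hmin⟩ := (Finite.wellFounded_of_trans_of_irrefl (pref u)).has_min _ hu
  have hv : IsFrac x u v := hv
  refine ⟨v, hv, fun w hw hwv => ?_⟩
  exact (hp.total u v w (hv.adj hz) (hw.adj hz) hwv.symm).resolve_right (hmin w hw)

omit [Fintype V] in
theorem IsBestFrac.unique (hp : StrictPrefs G pref) {u v w : V} (hv : IsBestFrac pref x u v)
    (hw : IsBestFrac pref x u w) : v = w := by
  by_contra hvw
  exact hp.irrefl u v (hp.trans u v w v (hv.2 w hw.1 (Ne.symm hvw)) (hw.2 v hv.1 hvw))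

theorem IsBestFrac.bestFrac_eq (hp : StrictPrefs G pref) {u v : V}
    (h : IsBestFrac pref x u v) : bestFrac pref x u = v := by
  have hex : ∃ v, IsBestFrac pref x u v := ⟨v, h⟩
  rw [bestFrac, dif_pos hex]
  exact hex.choose_spec.unique hp h

theorem isBestFrac_bestFrac (hp : StrictPrefs G pref) (hz : ∀ e, e ∉ G.edgeSet → x e = 0)
    {u : V} (hu : ∃ v, IsFrac x u v) : IsBestFrac pref x u (bestFrac pref x u) := by
  obtain ⟨v, hv⟩ := exists_isBestFrac hp hz hu
  rwa [hv.bestFrac_eq hp]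

omit [DecidableEq V] in
theorem bestFrac_eq_self {u : V} (hu : ¬∃ v, IsFrac x u v) : bestFrac pref x u = u :=
  dif_neg fun ⟨v, hv⟩ => hu ⟨v, hv.1⟩

theorem adj_bestFrac_iff (hp : StrictPrefs G pref) (hz : ∀ e, e ∉ G.edgeSet → x e = 0)
    {u : V} : G.Adj u (bestFrac pref x u) ↔ ∃ v, IsFrac x u v := by
  refine ⟨fun h => ?_, fun hu => (isBestFrac_bestFrac hp hz hu).1.adj hz⟩
  by_contra hu
  rw [bestFrac_eq_self hu] at h
  exact G.irrefl h

theorem InFSM.isFrac_of_ne_zero (hx : InFSM G pref x) {u v w : V} (hv : IsFrac x u v)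
    (hw : x s(u, w) ≠ 0) : IsFrac x u w := by
  refine ⟨hw, fun hw1 => hv.1 (hx.eq_zero_of_one_le_sum (s := {w}) (by simp [hw1]) ?_)⟩
  rintro hvw
  exact hv.2 (by rwa [mem_singleton.1 hvw])

theorem IsBestFrac.sum_better_eq_zero (hp : StrictPrefs G pref) (hx : InFSM G pref x)
    {m w : V} (h : IsBestFrac pref x m w) : ∑ a ∈ better pref m w, x s(m, a) = 0 := by
  refine sum_eq_zero fun a ha => ?_
  have haw : pref m a w := (mem_filter.1 ha).2
  by_contra hxa
  have hwa : pref m w a :=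
    h.2 a (hx.isFrac_of_ne_zero h.1 hxa) fun haw' => hp.irrefl m a (haw' ▸ haw)
  exact hp.irrefl m a (hp.trans m a w a haw hwa)

theorem IsBestFrac.isWorstFrac (hp : StrictPrefs G pref) (hx : InFSM G pref x) {m w : V}
    (h : IsBestFrac pref x m w) : IsWorstFrac pref x w m ∧ degSum G x w = 1 := by
  have hmw : G.Adj m w := h.1.adj hx.eq_zero_of_notMem
  have hm : m ∉ better pref w m := fun hm => hp.irrefl w m (mem_filter.1 hm).2
  have hw : w ∉ better pref m w := fun hw => hp.irrefl m w (mem_filter.1 hw).2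
  have h1 : 1 ≤ ∑ a ∈ insert m (better pref w m), x s(w, a) := by
    have := hx.one_le_phiSum hmw
    rwa [phiSum_eq hp hmw, sum_insert hw, h.sum_better_eq_zero hp hx, add_zero, Sym2.eq_swap,
      ← sum_insert (f := fun a => x s(w, a)) hm] at this
  refine ⟨⟨h.1.symm, fun a ha ham => ?_⟩,
    le_antisymm (hx.degSum_le_one w) (h1.trans (hx.sum_le_degSum w _))⟩
  by_contra hna
  refine ha.1 (hx.eq_zero_of_one_le_sum h1 ?_)
  simp only [mem_insert, better, mem_filter, mem_univ, true_and, not_or]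
  exact ⟨ham, hna⟩

theorem exists_isBestFrac_eq (hp : StrictPrefs G pref) (hx : InFSM G pref x) {w : V}
    (hw : ∃ v, IsFrac x w v) : ∃ m, IsBestFrac pref x m w := by
  set F : Finset V := univ.filter fun a => ∃ v, IsFrac x a v
  have hbest {a : V} (ha : a ∈ F) : IsBestFrac pref x a (bestFrac pref x a) :=
    isBestFrac_bestFrac hp hx.eq_zero_of_notMem (mem_filter.1 ha).2
  have hmaps : Set.MapsTo (bestFrac pref x) F F := fun a ha =>
    mem_filter.2 ⟨mem_univ _, a, (hbest ha).1.symm⟩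
  have hinj : Set.InjOn (bestFrac pref x) F := fun a ha b hb hab =>
    ((hbest ha).isWorstFrac hp hx).1.unique hp.rev (hab ▸ ((hbest hb).isWorstFrac hp hx).1)
  obtain ⟨m, hm, hmw⟩ := surjOn_of_injOn_of_card_le _ hmaps hinj le_rfl
    (mem_filter.2 ⟨mem_univ w, hw⟩)
  exact ⟨m, hmw ▸ hbest hm⟩

theorem IsWorstFrac.isBestFrac (hp : StrictPrefs G pref) (hx : InFSM G pref x) {w m : V}
    (h : IsWorstFrac pref x w m) : IsBestFrac pref x m w := by
  obtain ⟨a, ha⟩ := exists_isBestFrac_eq hp hx ⟨m, h.1⟩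
  rwa [(ha.isWorstFrac hp hx).1.unique hp.rev h] at ha

theorem InFSM.degSum_eq_one (hp : StrictPrefs G pref) (hx : InFSM G pref x) {w : V}
    (hw : ∃ v, IsFrac x w v) : degSum G x w = 1 :=
  let ⟨_, hm⟩ := exists_isBestFrac_eq hp hx hw
  (hm.isWorstFrac hp hx).2

def IsUpward (pref : V → V → V → Prop) (u : V) (s : Finset V) : Prop :=
  ∀ a ∈ s, ∀ b, pref u b a → b ∈ s

omit [DecidableEq V] in
theorem isUpward_better (hp : StrictPrefs G pref) (u v : V) :
    IsUpward pref u (better pref u v) := fun a ha b hba =>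
  mem_filter.2 ⟨mem_univ b, hp.trans u b a v hba (mem_filter.1 ha).2⟩

theorem isUpward_insert_better (hp : StrictPrefs G pref) (u v : V) :
    IsUpward pref u (insert v (better pref u v)) := by
  intro a ha b hba
  rcases mem_insert.1 ha with rfl | ha
  · exact mem_insert_of_mem (mem_filter.2 ⟨mem_univ b, hba⟩)
  · exact mem_insert_of_mem (isUpward_better hp u v a ha b hba)

theorem bestFrac_mem_iff (hp : StrictPrefs G pref) (hx : InFSM G pref x) {u : V}
    (hu : ∃ v, IsFrac x u v) {s : Finset V} (hs : IsUpward pref u s) :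
    bestFrac pref x u ∈ s ↔ 0 < ∑ w ∈ s, x s(u, w) := by
  have hb := isBestFrac_bestFrac hp hx.eq_zero_of_notMem hu
  refine ⟨fun h => sum_pos' (fun _ _ => hx.nonneg _)
    ⟨_, h, (hx.nonneg _).lt_of_ne (Ne.symm hb.1.1)⟩, fun h => ?_⟩
  obtain ⟨w, hw, hxw⟩ := exists_ne_zero_of_sum_ne_zero h.ne'
  by_cases hwb : w = bestFrac pref x u
  · exact hwb ▸ hw
  · exact hs w hw _ (hb.2 w (hx.isFrac_of_ne_zero hb.1 hxw) hwb)

theorem worstFrac_mem_iff (hp : StrictPrefs G pref) (hx : InFSM G pref x) {u : V}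
    (hu : ∃ v, IsFrac x u v) {s : Finset V} (hs : IsUpward pref u s) :
    worstFrac pref x u ∈ s ↔ ∑ w ∈ s, x s(u, w) = 1 := by
  have hw : IsWorstFrac pref x u (worstFrac pref x u) :=
    isBestFrac_bestFrac hp.rev hx.eq_zero_of_notMem hu
  refine ⟨fun h => ?_, fun h => ?_⟩
  · rw [← hx.degSum_eq_one hp hu, hx.degSum_eq_sum_of_support fun w hxw => ?_]
    by_cases hww : w = worstFrac pref x u
    · exact hww ▸ h
    · exact hs _ h w (hw.2 w (hx.isFrac_of_ne_zero hw.1 hxw) hww)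
  · by_contra hnot
    exact hw.1.1 (hx.eq_zero_of_one_le_sum h.ge hnot)

theorem ite_bestFrac_mem_sub_ite_worstFrac_mem (hp : StrictPrefs G pref) (hx : InFSM G pref x)
    (u : V) {s : Finset V} (hs : IsUpward pref u s) :
    ((if bestFrac pref x u ∈ s then 1 else 0) - if worstFrac pref x u ∈ s then 1 else 0 : ℝ) =
      if 0 < ∑ w ∈ s, x s(u, w) ∧ ∑ w ∈ s, x s(u, w) < 1 then 1 else 0 := by
  have hm1 : ∑ w ∈ s, x s(u, w) ≤ 1 := (hx.sum_le_degSum u s).trans (hx.degSum_le_one u)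
  by_cases hu : ∃ v, IsFrac x u v
  · rw [if_congr (bestFrac_mem_iff hp hx hu hs) rfl rfl,
      if_congr (worstFrac_mem_iff hp hx hu hs) rfl rfl]
    split_ifs <;> grind
  · rw [worstFrac, bestFrac_eq_self hu, bestFrac_eq_self hu, sub_self, if_neg]
    rintro ⟨hpos, hlt⟩
    obtain ⟨w, hw, hxw⟩ := exists_ne_zero_of_sum_ne_zero hpos.ne'
    have hxw1 : x s(u, w) = 1 := not_not.1 fun h1 => hu ⟨w, hxw, h1⟩
    exact hlt.not_ge (hxw1 ▸ single_le_sum (fun _ _ => hx.nonneg _) hw)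

theorem bestFrac_ne_worstFrac (hp : StrictPrefs G pref) (hx : InFSM G pref x) {u : V}
    (hu : ∃ v, IsFrac x u v) : bestFrac pref x u ≠ worstFrac pref x u := by
  intro heq
  have hb := isBestFrac_bestFrac hp hx.eq_zero_of_notMem hu
  have hw : IsWorstFrac pref x u (bestFrac pref x u) :=
    heq ▸ isBestFrac_bestFrac hp.rev hx.eq_zero_of_notMem hu
  have hdeg := hx.degSum_eq_one hp hu
  rw [hx.degSum_eq_sum_of_support (s := {bestFrac pref x u}) fun w hxw => ?_, sum_singleton]
    at hdeg
  · exact hb.1.2 hdeg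
  · by_contra hne
    have hne : w ≠ bestFrac pref x u := fun h => hne (mem_singleton.2 h)
    have hfrac := hx.isFrac_of_ne_zero hb.1 hxw
    exact hp.irrefl u w (hp.trans u w _ w (hw.2 w hfrac hne) (hb.2 w hfrac hne))

theorem bestFrac_eq_iff (hp : StrictPrefs G pref) (hx : InFSM G pref x) {a b : V}
    (hab : G.Adj a b) : bestFrac pref x a = b ↔ worstFrac pref x b = a := by
  constructor
  · intro h
    have ha := (adj_bestFrac_iff hp hx.eq_zero_of_notMem).1 (h ▸ hab)
    have hb : IsBestFrac pref x a b := h ▸ isBestFrac_bestFrac hp hx.eq_zero_of_notMem ha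
    exact (hb.isWorstFrac hp hx).1.bestFrac_eq hp.rev
  · intro h
    rw [worstFrac] at h
    have hb := (adj_bestFrac_iff hp.rev hx.eq_zero_of_notMem).1 (h ▸ hab.symm)
    have ha : IsWorstFrac pref x b a :=
      h ▸ isBestFrac_bestFrac hp.rev hx.eq_zero_of_notMem hb
    exact (ha.isBestFrac hp hx).bestFrac_eq hp

noncomputable def dirAt (pref : V → V → V → Prop) (x : Sym2 V → ℝ) (σ : V → ℝ) (u w : V) :
    ℝ :=
  σ u * ((if bestFrac pref x u = w then 1 else 0) - if worstFrac pref x u = w then 1 else 0)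

/-- The two orientations agree (`fracDir_mk`), since the favourite fractional partner of `u`
has `u` as its least favourite one and `σ` changes sign along edges; averaging them only makes
this a function on `Sym2 V`. -/
noncomputable def fracDir (pref : V → V → V → Prop) (x : Sym2 V → ℝ) (σ : V → ℝ) :
    Sym2 V → ℝ :=
  Sym2.lift ⟨fun a b => (dirAt pref x σ a b + dirAt pref x σ b a) / 2, fun a b => by ring⟩

theorem sum_dirAt (pref : V → V → V → Prop) (x : Sym2 V → ℝ) (σ : V → ℝ) (u : V)
    (s : Finset V) :
    ∑ w ∈ s, dirAt pref x σ u w = σ u *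
      ((if bestFrac pref x u ∈ s then 1 else 0) - if worstFrac pref x u ∈ s then 1 else 0) := by
  simp only [dirAt, ← mul_sum, sum_sub_distrib, sum_ite_eq]

theorem isFrac_of_dirAt_ne_zero (hp : StrictPrefs G pref) (hz : ∀ e, e ∉ G.edgeSet → x e = 0)
    {a b : V} (h : dirAt pref x σ a b ≠ 0) : IsFrac x a b := by
  by_cases ha : ∃ v, IsFrac x a v
  · by_cases hb : bestFrac pref x a = b
    · exact hb ▸ (isBestFrac_bestFrac hp hz ha).1
    · by_cases hw : worstFrac pref x a = b
      · exact hw ▸ (isBestFrac_bestFrac hp.rev hz ha).1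
      · simp [dirAt, hb, hw] at h
  · simp [dirAt, worstFrac, bestFrac_eq_self ha] at h

theorem dirAt_comm (hp : StrictPrefs G pref) (hx : InFSM G pref x)
    (hσ : ∀ a b, G.Adj a b → σ a + σ b = 0) (a b : V) :
    dirAt pref x σ b a = dirAt pref x σ a b := by
  by_cases hab : G.Adj a b
  · rw [dirAt, dirAt, if_congr (bestFrac_eq_iff hp hx hab.symm) rfl rfl,
      if_congr (bestFrac_eq_iff hp hx hab).symm rfl rfl,
      show σ b = -σ a by linarith [hσ a b hab]]
    ring
  · have hzero {a b : V} (hab : ¬G.Adj a b) : dirAt pref x σ a b = 0 := by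
      by_contra h
      exact hab ((isFrac_of_dirAt_ne_zero hp hx.eq_zero_of_notMem h).adj hx.eq_zero_of_notMem)
    rw [hzero hab, hzero fun h => hab h.symm]

theorem fracDir_mk (hp : StrictPrefs G pref) (hx : InFSM G pref x)
    (hσ : ∀ a b, G.Adj a b → σ a + σ b = 0) (a b : V) :
    fracDir pref x σ s(a, b) = dirAt pref x σ a b := by
  rw [fracDir, Sym2.lift_mk]
  dsimp only
  rw [dirAt_comm hp hx hσ a b]
  ring

theorem pos_of_fracDir_ne_zero (hp : StrictPrefs G pref) (hx : InFSM G pref x)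
    (hσ : ∀ a b, G.Adj a b → σ a + σ b = 0) {e : Sym2 V} (he : fracDir pref x σ e ≠ 0) :
    0 < x e := by
  induction e using Sym2.ind with
  | _ a b =>
    rw [fracDir_mk hp hx hσ] at he
    exact (hx.nonneg _).lt_of_ne (isFrac_of_dirAt_ne_zero hp hx.eq_zero_of_notMem he).1.symm

theorem degSum_fracDir (hp : StrictPrefs G pref) (hx : InFSM G pref x)
    (hσ : ∀ a b, G.Adj a b → σ a + σ b = 0) (v : V) : degSum G (fracDir pref x σ) v = 0 := by
  have hmem :
      bestFrac pref x v ∈ G.neighborFinset v ↔ worstFrac pref x v ∈ G.neighborFinset v := by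
    simp only [mem_neighborFinset, worstFrac, adj_bestFrac_iff hp hx.eq_zero_of_notMem,
      adj_bestFrac_iff hp.rev hx.eq_zero_of_notMem]
  simp only [degSum_eq_sum_neighborFinset, fracDir_mk hp hx hσ]
  rw [sum_dirAt, if_congr hmem rfl rfl, sub_self, mul_zero]

theorem phiSum_fracDir_of_tight (hp : StrictPrefs G pref) (hx : InFSM G pref x)
    (hσ : ∀ a b, G.Adj a b → σ a + σ b = 0) {u v : V} (huv : G.Adj u v)
    (ht : phiSum G pref x u v = 1) : phiSum G pref (fracDir pref x σ) u v = 0 := by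
  rw [phiSum_eq hp huv] at ht ⊢
  simp only [fracDir_mk hp hx hσ]
  rw [sum_dirAt, sum_dirAt,
    ite_bestFrac_mem_sub_ite_worstFrac_mem hp hx u (isUpward_insert_better hp u v),
    ite_bestFrac_mem_sub_ite_worstFrac_mem hp hx v (isUpward_better hp v u)]
  set t := ∑ w ∈ insert v (better pref u v), x s(u, w)
  rw [show ∑ w ∈ better pref v u, x s(v, w) = 1 - t by linarith,
    show σ v = -σ u by linarith [hσ u v huv]]
  have hiff : (0 < 1 - t ∧ 1 - t < 1) ↔ (0 < t ∧ t < 1) := by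
    constructor <;> rintro ⟨h₁, h₂⟩ <;> constructor <;> linarith
  rw [if_congr hiff rfl rfl]
  ring

theorem fracDir_ne_zero (hp : StrictPrefs G pref) (hx : InFSM G pref x) (hσ0 : ∀ u, σ u ≠ 0)
    (hσ : ∀ a b, G.Adj a b → σ a + σ b = 0) {e : Sym2 V} (he0 : x e ≠ 0) (he1 : x e ≠ 1) :
    fracDir pref x σ ≠ 0 := by
  induction e using Sym2.ind with
  | _ a b =>
    intro h0
    have hbw := bestFrac_ne_worstFrac hp hx ⟨b, he0, he1⟩
    have := congrFun h0 s(a, bestFrac pref x a)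
    rw [fracDir_mk hp hx hσ, dirAt, if_pos rfl, if_neg hbw.symm] at this
    simp only [sub_zero, mul_one, Pi.zero_apply] at this
    exact hσ0 a this

end

open scoped Classical in
/-- Vande Vate–Rothblum: for a bipartite instance, every extreme point
of `FSM(G,≺)` is integral, and the integral points of `FSM(G,≺)` are exactly the
incidence vectors of stable matchings. -/
theorem bipartite_FSM_integral (G : SimpleGraph V) (pref : V → V → V → Prop)
    (hpref : StrictPrefs G pref) (hbip : G.Colorable 2) :
    (∀ x ∈ Set.extremePoints ℝ {y : Sym2 V → ℝ | InFSM G pref y},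
      ∀ e, x e = 0 ∨ x e = 1) ∧
    (∀ x : Sym2 V → ℝ, (∀ e, x e = 0 ∨ x e = 1) →
      (InFSM G pref x ↔ ∃ M, IsStable G pref M ∧
        ∀ e, x e = if e ∈ M then 1 else 0)) := by
  refine ⟨fun x hx e => ?_, fun x h01 => inFSM_iff_exists_isStable hpref h01⟩
  by_contra he
  obtain ⟨he0, he1⟩ := not_or.1 he
  have hxF : InFSM G pref x := hx.1
  obtain ⟨σ, hσ0, hσ⟩ := exists_sign_of_colorable_two hbip
  refine notMem_extremePoints_of_eventually_add_smul_mem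
    (fracDir_ne_zero hpref hxF hσ0 hσ he0 he1) ?_ hx
  exact hxF.eventually_add_smul (fun _ => pos_of_fracDir_ne_zero hpref hxF hσ)
    (degSum_fracDir hpref hxF hσ) fun _ _ => phiSum_fracDir_of_tight hpref hxF hσ
end
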